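/- arXiv:2503.01589 — 9 statements merged into one kernel-verified Lean document; each statement's English description precedes it below -/
import Mathlib

section
/- Let Ω : [0,1] → [−1,1] be continuous. For each n ≥ 1 define the random step function Ω_n by Ω_n(x) = Ω(U_{(j)}^n) for x ∈ I_j^n, j = 1,…,n. Then almost surely sup_{x ∈ [0,1)} |Ω_n(x) − Ω(x)| → 0 as n → ∞. -/
/-!
By the strong law of large numbers, almost surely the empirical distribution function
`F_n(s) = #{i < n | U_i ≤ s} / n` converges to `s` at every rational `s ∈ [0,1]`. The `F_n` are
monotone and the limit is continuous, so the convergence is uniform on `[0,1]` (Pólya). The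
(zero-based) `j`-th order statistic `t` satisfies `F_n(t⁻) ≤ j/n < F_n(t)`, hence
`sup_j |U_(j) - j/n| → 0`, and the uniform continuity of `Ω` on `[0,1]` finishes the proof.
-/

open MeasureTheory ProbabilityTheory

/-- The `j`-th order statistic (`j = 0, …, n−1`, zero-based) of the sample `U 0 ω, …, U (n−1) ω`:
the `j`-th entry of the nondecreasing rearrangement. -/
noncomputable def orderStat {α : Type*} (U : ℕ → α → ℝ) (n : ℕ) (j : Fin n) (ω : α) : ℝ :=
  (((Multiset.range n).map (fun i => U i ω)).sort (· ≤ ·)).get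
    ⟨j, by simp⟩

open Filter Finset Topology

theorem ae_tendsto_card_filter_mem_div {Ω E : Type*} [MeasurableSpace Ω] [MeasurableSpace E]
    {μ : Measure Ω} [IsFiniteMeasure μ] (X : ℕ → Ω → E) (hX : ∀ i, Measurable (X i))
    (hindep : Pairwise fun i j => IndepFun (X i) (X j) μ)
    (hident : ∀ i, IdentDistrib (X i) (X 0) μ μ) {s : Set E} (hs : MeasurableSet s)
    [DecidablePred (· ∈ s)] :
    ∀ᵐ ω ∂μ, Tendsto (fun n : ℕ => (#{i ∈ range n | X i ω ∈ s} : ℝ) / n) atTop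
      (𝓝 (μ.real (X 0 ⁻¹' s))) := by
  have hind : Measurable (s.indicator (1 : E → ℝ)) := measurable_one.indicator hs
  have hlaw := strong_law_ae_real (fun i ω => s.indicator 1 (X i ω))
    ((integrable_const (1 : ℝ)).indicator (hX 0 hs))
    (fun i j hij => (hindep hij).comp hind hind) (fun i => (hident i).comp hind)
  have hmean : ∫ ω, s.indicator (1 : E → ℝ) (X 0 ω) ∂μ = μ.real (X 0 ⁻¹' s) := by
    rw [← integral_indicator_one (hX 0 hs)]
    rfl
  have hsum : ∀ ω n, ∑ i ∈ range n, s.indicator (1 : E → ℝ) (X i ω) =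
      #{i ∈ range n | X i ω ∈ s} := by
    intro ω n
    rw [Finset.natCast_card_filter]
    simp only [Set.indicator_apply, Pi.one_apply]
  filter_upwards [hlaw] with ω hω
  simpa only [hmean, hsum] using hω

namespace List

variable {β : Type*} [LinearOrder β] {l : List β}

theorem Pairwise.lt_countP_le_getElem (hl : l.Pairwise (· ≤ ·)) {j : ℕ} (hj : j < l.length) :
    j < l.countP (· ≤ l[j]) := by
  have htake : ∀ a ∈ l.take (j + 1), a ≤ l[j] := by
    intro a ha
    obtain ⟨i, hi, rfl⟩ := List.mem_take_iff_getElem.1 ha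
    exact hl.sortedLE.monotone_get (a := ⟨i, by omega⟩) (b := ⟨j, hj⟩) (by simp; omega)
  generalize l[j] = t at htake ⊢
  calc j < (l.take (j + 1)).length := by simp; omega
    _ = (l.take (j + 1)).countP (· ≤ t) := (List.countP_eq_length.2 (by simpa using htake)).symm
    _ ≤ l.countP (· ≤ t) := (l.take_sublist _).countP_le

theorem Pairwise.countP_lt_getElem_le (hl : l.Pairwise (· ≤ ·)) {j : ℕ} (hj : j < l.length) :
    l.countP (· < l[j]) ≤ j := by
  have hdrop : ∀ a ∈ l.drop j, ¬ a < l[j] := by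
    intro a ha
    obtain ⟨i, hi, rfl⟩ := List.mem_drop_iff_getElem.1 ha
    exact not_lt.2 (hl.sortedLE.monotone_get (a := ⟨j, hj⟩) (b := ⟨j + i, by omega⟩) (by simp))
  generalize l[j] = t at hdrop ⊢
  rw [← l.take_append_drop j, List.countP_append,
    (List.countP_eq_zero (l := l.drop j)).2 (by simpa using hdrop), add_zero]
  exact List.countP_le_length.trans (by simp)

end List

section OrderStatistics

variable {α : Type*} (U : ℕ → α → ℝ) {n : ℕ} (j : Fin n) (ω : α)

theorem countP_sort_map_range (v : ℕ → ℝ) (p : ℝ → Prop) [DecidablePred p] :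
    (((Multiset.range n).map v).sort (· ≤ ·)).countP p = #{i ∈ range n | p (v i)} := by
  rw [← Multiset.coe_countP, Multiset.sort_eq, Multiset.countP_map]
  rfl

theorem exists_eq_orderStat : ∃ i < n, U i ω = orderStat U n j ω := by
  have hmem : orderStat U n j ω ∈ ((Multiset.range n).map (U · ω)).sort (· ≤ ·) :=
    List.get_mem _ _
  simpa [Multiset.mem_sort] using hmem

theorem orderStat_mem {s : Set ℝ} (hU : ∀ i < n, U i ω ∈ s) : orderStat U n j ω ∈ s := by
  obtain ⟨i, hi, hit⟩ := exists_eq_orderStat U j ω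
  exact hit ▸ hU i hi

theorem lt_card_filter_le_orderStat : (j : ℕ) < #{i ∈ range n | U i ω ≤ orderStat U n j ω} := by
  rw [← countP_sort_map_range (U · ω) (· ≤ orderStat U n j ω)]
  exact (Multiset.pairwise_sort _ _).lt_countP_le_getElem _

theorem card_filter_lt_orderStat_le : #{i ∈ range n | U i ω < orderStat U n j ω} ≤ j := by
  rw [← countP_sort_map_range (U · ω) (· < orderStat U n j ω)]
  exact (Multiset.pairwise_sort _ _).countP_lt_getElem_le _

end OrderStatistics

noncomputable def empiricalCDF (v : ℕ → ℝ) (n : ℕ) (s : ℝ) : ℝ :=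
  #{i ∈ range n | v i ≤ s} / n

theorem monotone_empiricalCDF (v : ℕ → ℝ) (n : ℕ) : Monotone (empiricalCDF v n) := by
  intro s t hst
  unfold empiricalCDF
  gcongr

theorem abs_sub_lt_of_monotone_of_grid {F : ℝ → ℝ} (hF : Monotone F) {m : ℕ} (hm : 0 < m)
    {η : ℝ} (hgrid : ∀ k ≤ m, |F (k / m) - k / m| < η) {s : ℝ} (hs : s ∈ Set.Icc 0 1) :
    |F s - s| < η + 1 / m := by
  have hm' : (0 : ℝ) < m := Nat.cast_pos.2 hm
  have hsm : 0 ≤ s * m := mul_nonneg hs.1 hm'.le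
  set a : ℕ := ⌊s * m⌋₊
  set b : ℕ := ⌈s * m⌉₊
  have hb : b ≤ m := Nat.ceil_le.2 (by nlinarith [hs.2])
  have has : (a : ℝ) / m ≤ s := (div_le_iff₀ hm').2 (Nat.floor_le hsm)
  have hsa : s < a / m + 1 / m := by
    rw [← add_div, lt_div_iff₀ hm']; exact Nat.lt_floor_add_one _
  have hsb : s ≤ b / m := (le_div_iff₀ hm').2 (Nat.le_ceil _)
  have hbs : (b : ℝ) / m < s + 1 / m := by
    rw [div_lt_iff₀ hm', add_mul, one_div_mul_cancel hm'.ne']; exact Nat.ceil_lt_add_one hsm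
  have ha := abs_lt.1 (hgrid a ((Nat.floor_le_ceil _).trans hb))
  have hb' := abs_lt.1 (hgrid b hb)
  rw [abs_lt]
  constructor <;> linarith [hF has, hF hsb]

theorem tendstoUniformlyOn_Icc_of_monotone {ι : Type*} {l : Filter ι} {F : ι → ℝ → ℝ}
    (hF : ∀ n, Monotone (F n))
    (hlim : ∀ q : ℚ, (q : ℝ) ∈ Set.Icc 0 1 → Tendsto (F · q) l (𝓝 q)) :
    TendstoUniformlyOn F id l (Set.Icc 0 1) := by
  rw [Metric.tendstoUniformlyOn_iff]
  intro ε hε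
  obtain ⟨m, hm⟩ := exists_nat_one_div_lt (half_pos hε)
  have hgrid : ∀ᶠ n in l, ∀ k ∈ range (m + 2),
      |F n (k / (m + 1 : ℕ)) - k / (m + 1 : ℕ)| < ε / 2 := by
    rw [eventually_all_finset]
    intro k hk
    have hq : ((k / (m + 1) : ℚ) : ℝ) = k / (m + 1 : ℕ) := by push_cast; rfl
    have hmem : ((k / (m + 1) : ℚ) : ℝ) ∈ Set.Icc 0 1 := by
      rw [hq]
      exact ⟨by positivity, div_le_one_of_le₀
        (by exact_mod_cast Nat.lt_succ_iff.1 (mem_range.1 hk)) (by positivity)⟩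
    have := Metric.tendsto_nhds.1 (hlim _ hmem) (ε / 2) (half_pos hε)
    simpa only [hq, Real.dist_eq] using this
  filter_upwards [hgrid] with n hn s hs
  rw [Real.dist_eq, abs_sub_comm]
  have := abs_sub_lt_of_monotone_of_grid (hF n) m.succ_pos
    (fun k hk => hn k (mem_range.2 (by omega))) hs
  push_cast at this
  exact this.trans (by linarith)

theorem ae_tendstoUniformlyOn_empiricalCDF {Ω : Type*} [MeasurableSpace Ω] {μ : Measure Ω}
    [IsFiniteMeasure μ] (U : ℕ → Ω → ℝ) (hU : ∀ i, Measurable (U i))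
    (hindep : Pairwise fun i j => IndepFun (U i) (U j) μ)
    (hunif : ∀ i, μ.map (U i) = volume.restrict (Set.Icc 0 1)) :
    ∀ᵐ ω ∂μ, TendstoUniformlyOn (fun n => empiricalCDF (U · ω) n) id atTop (Set.Icc 0 1) := by
  have hident : ∀ i, IdentDistrib (U i) (U 0) μ μ := fun i =>
    ⟨(hU i).aemeasurable, (hU 0).aemeasurable, by rw [hunif, hunif]⟩
  have hcdf : ∀ q ∈ Set.Icc (0 : ℝ) 1, μ.real (U 0 ⁻¹' Set.Iic q) = q := by
    intro q hq
    have hset : Set.Iic q ∩ Set.Icc 0 1 = Set.Icc 0 q := by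
      ext x
      simp only [Set.mem_inter_iff, Set.mem_Iic, Set.mem_Icc]
      constructor
      · exact fun h => ⟨h.2.1, h.1⟩
      · exact fun h => ⟨h.2, h.1, h.2.trans hq.2⟩
    rw [← map_measureReal_apply (hU 0) measurableSet_Iic, hunif,
      measureReal_restrict_apply measurableSet_Iic, hset, Real.volume_real_Icc_of_le hq.1,
      sub_zero]
  have hlim : ∀ᵐ ω ∂μ, ∀ q : ℚ, (q : ℝ) ∈ Set.Icc 0 1 →
      Tendsto (fun n => empiricalCDF (U · ω) n q) atTop (𝓝 q) := by
    refine ae_all_iff.2 fun q => eventually_imp_distrib_left.2 fun hq => ?_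
    simpa only [hcdf q hq, empiricalCDF, Set.mem_Iic] using
      ae_tendsto_card_filter_mem_div U hU hindep hident (measurableSet_Iic (a := (q : ℝ)))
  filter_upwards [hlim] with ω hω
  exact tendstoUniformlyOn_Icc_of_monotone (fun n => monotone_empiricalCDF _ n) hω

theorem abs_orderStat_sub_le {α : Type*} (U : ℕ → α → ℝ) {n : ℕ} (j : Fin n) (ω : α) {η : ℝ}
    (hU : ∀ i < n, U i ω ∈ Set.Icc 0 1)
    (hF : ∀ s ∈ Set.Icc (0 : ℝ) 1, |empiricalCDF (U · ω) n s - s| ≤ η) :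
    |orderStat U n j ω - j / n| ≤ η := by
  set t := orderStat U n j ω
  have ht : t ∈ Set.Icc 0 1 := orderStat_mem U j ω hU
  have hn : (0 : ℝ) < n := Nat.cast_pos.2 j.pos
  have hjn : (0 : ℝ) ≤ j / n := by positivity
  have hη := (abs_nonneg _).trans (hF t ht)
  have hlow : (j + 1 : ℝ) / n ≤ empiricalCDF (U · ω) n t := by
    unfold empiricalCDF
    gcongr
    exact_mod_cast lt_card_filter_le_orderStat U j ω
  -- `F_n ≤ j / n` strictly left of `t`, so the upper bound on `t` is obtained as a left limit.
  have hup : ∀ s < t, s ≤ j / n + η := by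
    intro s hst
    rcases lt_or_ge s 0 with hs | hs
    · linarith
    have hFs : empiricalCDF (U · ω) n s ≤ j / n := by
      unfold empiricalCDF
      gcongr
      exact_mod_cast (card_le_card fun i hi => by
        simp only [mem_filter] at hi ⊢; exact ⟨hi.1, hi.2.trans_lt hst⟩).trans
        (card_filter_lt_orderStat_le U j ω)
    linarith [(abs_le.1 (hF s ⟨hs, hst.le.trans ht.2⟩)).1]
  rw [abs_sub_le_iff]
  constructor
  · linarith [le_of_forall_lt_imp_le_of_dense hup]
  · linarith [(abs_le.1 (hF t ht)).2, add_div (j : ℝ) 1 n, div_nonneg zero_le_one hn.le]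

theorem stmt_2_general (Ω : ℝ → ℝ)
    (hΩ_cont : ContinuousOn Ω (Set.Icc (0:ℝ) 1))
    {α : Type*} [MeasureSpace α] [IsProbabilityMeasure (ℙ : Measure α)]
    (U : ℕ → α → ℝ) (h_meas : ∀ i, Measurable (U i))
    (h_indep : iIndepFun U ℙ)
    (h_unif : ∀ i, Measure.map (U i) ℙ = volume.restrict (Set.Icc (0:ℝ) 1)) :
    ∀ᵐ ω ∂(ℙ : Measure α), ∀ ε > (0:ℝ), ∃ N : ℕ, ∀ n ≥ N, ∀ j : Fin n,
      ∀ x ∈ Set.Ico ((j : ℝ) / n) (((j : ℕ) + 1 : ℝ) / n),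
        |Ω (orderStat U n j ω) - Ω x| < ε := by
  have hU01 : ∀ᵐ ω ∂(ℙ : Measure α), ∀ i, U i ω ∈ Set.Icc (0:ℝ) 1 := ae_all_iff.2 fun i =>
    ae_of_ae_map (h_meas i).aemeasurable (h_unif i ▸ ae_restrict_mem measurableSet_Icc)
  filter_upwards [hU01, ae_tendstoUniformlyOn_empiricalCDF U h_meas
    (fun i j hij => h_indep.indepFun hij) h_unif] with ω hω01 hωF ε hε
  obtain ⟨δ, hδ, hΩδ⟩ := Metric.uniformContinuousOn_iff.1
    (isCompact_Icc.uniformContinuousOn_of_continuous hΩ_cont) ε hε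
  obtain ⟨N, hN⟩ := eventually_atTop.1 ((Metric.tendstoUniformlyOn_iff.1 hωF (δ / 2)
    (half_pos hδ)).and (tendsto_natCast_atTop_atTop.eventually_gt_atTop (2 / δ)))
  refine ⟨N, fun n hn j x hx => ?_⟩
  obtain ⟨hFn, hnδ⟩ := hN n hn
  have hn : (0 : ℝ) < n := Nat.cast_pos.2 j.pos
  have h1n : 1 / (n : ℝ) < δ / 2 := by
    rw [div_lt_div_iff₀ hn two_pos]; linarith [(div_lt_iff₀ hδ).1 hnδ]
  have hord := abs_le.1 <| abs_orderStat_sub_le U j ω (fun i _ => hω01 i)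
    fun s hs => by rw [abs_sub_comm]; exact (hFn s hs).le
  have hxj : x < j / n + 1 / n := by rw [← add_div]; exact hx.2
  have hx01 : x ∈ Set.Icc 0 1 :=
    ⟨(by positivity : (0 : ℝ) ≤ j / n).trans hx.1,
      hx.2.le.trans (div_le_one_of_le₀ (by exact_mod_cast j.isLt) hn.le)⟩
  refine hΩδ _ (orderStat_mem U j ω fun i _ => hω01 i) x hx01 ?_
  rw [Real.dist_eq, abs_lt]
  constructor <;> linarith [hx.1]

/-- Let `Ω : [0,1] → [−1,1]` be continuous and let `(U_i)` be i.i.d. uniform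
on `[0,1]`. For each `n` define the random step function `Ω_n(x) = Ω(U_{(j)}^n)` for
`x ∈ I_j^n = [(j−1)/n, j/n)`. Then almost surely `sup_{x ∈ [0,1)} |Ω_n(x) − Ω(x)| → 0` as
`n → ∞` (stated as uniform convergence: for every `ε > 0` there is `N` such that for all
`n ≥ N`, all `j` and all `x ∈ I_j^n`, `|Ω(U_{(j)}^n) − Ω(x)| < ε`). -/
theorem stmt_2 (Ω : ℝ → ℝ)
    (hΩ_cont : ContinuousOn Ω (Set.Icc (0:ℝ) 1))
    (hΩ_range : ∀ x ∈ Set.Icc (0:ℝ) 1, Ω x ∈ Set.Icc (-1:ℝ) 1)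
    {α : Type*} [MeasureSpace α] [IsProbabilityMeasure (ℙ : Measure α)]
    (U : ℕ → α → ℝ) (h_meas : ∀ i, Measurable (U i))
    (h_indep : iIndepFun U ℙ)
    (h_unif : ∀ i, Measure.map (U i) ℙ = volume.restrict (Set.Icc (0:ℝ) 1)) :
    ∀ᵐ ω ∂(ℙ : Measure α), ∀ ε > (0:ℝ), ∃ N : ℕ, ∀ n ≥ N, ∀ j : Fin n,
      ∀ x ∈ Set.Ico ((j : ℝ) / n) (((j : ℕ) + 1 : ℝ) / n),
        |Ω (orderStat U n j ω) - Ω x| < ε :=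
  stmt_2_general Ω hΩ_cont U h_meas h_indep h_unif
end

section
/- Let Ω : [0,1] → [−1,1] be continuous and nonconstant, set Ω̄ = ∫₀¹ Ω(x) dx, let K > 0 and p ∈ (0,1], let γ = sup_{x∈[0,1]} |Ω(x) − Ω̄| / (Kp), and let q ≥ 1. Set κ = Kpqγ and u(x) = arcsin((Ω(x) − Ω̄)/κ) (well-defined since |Ω(x) − Ω̄| ≤ κ). If qγ = ∫₀¹ √(1 − ((Ω(y) − Ω̄)/κ)²) dy (the change-of-variables form of Ermentrout's condition γ = q^{-2} ∫_{−1}^{1} √(q² − s²) f(s) ds, where f is the density of the frequency distribution whose quantile function is Ω), then the function θ(x,t) = Ω̄ t + u(x) satisfies ∂θ/∂t (x,t) = Ω(x) + Kp ∫₀¹ sin(θ(y,t) − θ(x,t)) dy for all x ∈ [0,1] and all t ∈ ℝ. -/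
/-!
Writing `g = (Ω - Ω̄)/κ`, the phase is `u = arcsin g`, so `sin (u y - u x)` is
`g y √(1 - g x²) - √(1 - g y²) g x`. Integrating in `y`, the first term vanishes because `g` has
mean zero, and Ermentrout's condition turns the second into `-qγ g x`. Since `Kp · qγ = κ`,
the coupling term is `-(Ω x - Ω̄)`, which exactly cancels the deviation of `Ω x` from the mean
frequency `Ω̄`. The bound `|Ω - Ω̄| ≤ sup |Ω - Ω̄| ≤ κ` (from `q ≥ 1`) keeps `g` in `[-1, 1]`.
-/

open MeasureTheory intervalIntegral Set

theorem Real.sin_arcsin_sub_arcsin {a b : ℝ} (ha : a ∈ Icc (-1 : ℝ) 1) (hb : b ∈ Icc (-1 : ℝ) 1) :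
    Real.sin (Real.arcsin a - Real.arcsin b) = a * √(1 - b ^ 2) - √(1 - a ^ 2) * b := by
  rw [Real.sin_sub, Real.sin_arcsin ha.1 ha.2, Real.sin_arcsin hb.1 hb.2,
    Real.cos_arcsin, Real.cos_arcsin]

theorem integral_sin_arcsin_sub_arcsin {g : ℝ → ℝ} {a b c : ℝ} (hg : ContinuousOn g (uIcc a b))
    (hg_mem : ∀ y ∈ uIcc a b, g y ∈ Icc (-1 : ℝ) 1) (hc : c ∈ Icc (-1 : ℝ) 1) :
    ∫ y in a..b, Real.sin (Real.arcsin (g y) - Real.arcsin c) =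
      (∫ y in a..b, g y) * √(1 - c ^ 2) - (∫ y in a..b, √(1 - g y ^ 2)) * c := by
  have hg_int : IntervalIntegrable g volume a b := hg.intervalIntegrable
  have hsqrt_int : IntervalIntegrable (fun y => √(1 - g y ^ 2)) volume a b :=
    (Real.continuous_sqrt.comp_continuousOn (continuousOn_const.sub (hg.pow 2))).intervalIntegrable
  rw [← intervalIntegral.integral_mul_const, ← intervalIntegral.integral_mul_const,
    ← intervalIntegral.integral_sub (hg_int.mul_const _) (hsqrt_int.mul_const _)]
  exact intervalIntegral.integral_congr fun y hy => Real.sin_arcsin_sub_arcsin (hg_mem y hy) hc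

theorem integral_sub_integral_eq_zero {f : ℝ → ℝ} (hf : IntervalIntegrable f volume 0 1) :
    ∫ y in (0 : ℝ)..1, (f y - ∫ x in (0 : ℝ)..1, f x) = 0 := by
  simp [intervalIntegral.integral_sub hf intervalIntegrable_const]

theorem div_mem_Icc_of_abs_le {a κ : ℝ} (h : |a| ≤ κ) : a / κ ∈ Icc (-1 : ℝ) 1 := by
  rw [mem_Icc, ← abs_le, abs_div]
  exact div_le_one_of_le₀ (h.trans (le_abs_self κ)) (abs_nonneg κ)

theorem stmt_3_general (Ω : ℝ → ℝ)
    (hΩ_cont : ContinuousOn Ω (Set.Icc (0:ℝ) 1))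
    (Ωbar : ℝ) (hΩbar : Ωbar = ∫ x in (0:ℝ)..1, Ω x)
    (K p : ℝ) (hK : 0 < K) (hp : p ∈ Set.Ioc (0:ℝ) 1)
    (γ : ℝ) (hγ : γ = sSup ((fun x => |Ω x - Ωbar|) '' Set.Icc (0:ℝ) 1) / (K * p))
    (q : ℝ) (hq : 1 ≤ q)
    (κ : ℝ) (hκ : κ = K * p * q * γ)
    (u : ℝ → ℝ) (hu : ∀ x, u x = Real.arcsin ((Ω x - Ωbar) / κ))
    (hErm : q * γ = ∫ y in (0:ℝ)..1, Real.sqrt (1 - ((Ω y - Ωbar) / κ)^2)) :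
    ∀ x ∈ Set.Icc (0:ℝ) 1, ∀ t : ℝ,
      HasDerivAt (fun s : ℝ => Ωbar * s + u x)
        (Ω x + K * p * ∫ y in (0:ℝ)..1,
          Real.sin ((Ωbar * t + u y) - (Ωbar * t + u x))) t := by
  intro x hx t
  set M := sSup ((fun x => |Ω x - Ωbar|) '' Icc (0:ℝ) 1)
  have hI : uIcc (0 : ℝ) 1 = Icc 0 1 := uIcc_of_le zero_le_one
  have hle_M : ∀ y ∈ Icc (0:ℝ) 1, |Ω y - Ωbar| ≤ M := fun y hy =>
    le_csSup (isCompact_Icc.bddAbove_image (hΩ_cont.sub continuousOn_const).abs) ⟨y, hy, rfl⟩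
  have hκ_eq : κ = q * M := by
    rw [hκ, hγ]
    field_simp [hK.ne', hp.1.ne']
  have hle_κ : ∀ y ∈ Icc (0:ℝ) 1, |Ω y - Ωbar| ≤ κ := fun y hy => by
    have hM_nonneg : 0 ≤ M := Real.sSup_nonneg (by rintro _ ⟨z, -, rfl⟩; exact abs_nonneg _)
    exact (hle_M y hy).trans (hκ_eq ▸ le_mul_of_one_le_left hM_nonneg hq)
  have hmean : ∫ y in (0:ℝ)..1, (Ω y - Ωbar) / κ = 0 := by
    rw [intervalIntegral.integral_div, hΩbar,
      integral_sub_integral_eq_zero (hΩ_cont.intervalIntegrable_of_Icc zero_le_one), zero_div]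
  have hcoupling : ∫ y in (0:ℝ)..1, Real.sin ((Ωbar * t + u y) - (Ωbar * t + u x)) =
      -(q * γ) * ((Ω x - Ωbar) / κ) := by
    simp only [hu, add_sub_add_left_eq_sub]
    have hg_cont : ContinuousOn (fun y => (Ω y - Ωbar) / κ) (uIcc 0 1) :=
      hI ▸ (hΩ_cont.sub continuousOn_const).div_const κ
    rw [integral_sin_arcsin_sub_arcsin hg_cont
      (fun y hy => div_mem_Icc_of_abs_le (hle_κ y (hI ▸ hy))) (div_mem_Icc_of_abs_le (hle_κ x hx)),
      hmean, hErm]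
    ring
  have hrate : Ω x + K * p * ∫ y in (0:ℝ)..1,
      Real.sin ((Ωbar * t + u y) - (Ωbar * t + u x)) = Ωbar := by
    rw [hcoupling, show K * p * (-(q * γ) * ((Ω x - Ωbar) / κ)) = -(κ * ((Ω x - Ωbar) / κ)) by
      rw [hκ]; ring,
      -- also when `κ = 0`, since `|Ω x - Ω̄| ≤ κ` then forces `Ω x = Ω̄`
      mul_div_cancel_of_imp' fun h => abs_nonpos_iff.mp (h ▸ hle_κ x hx)]
    ring
  rw [hrate]
  simpa using ((hasDerivAt_id t).const_mul Ωbar).add_const (u x)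

/-- (Ermentrout's synchronous solution on the Erdős–Rényi graphon.)
Let `Ω : [0,1] → [−1,1]` be continuous and nonconstant, `Ω̄ = ∫₀¹ Ω`, `K > 0`, `p ∈ (0,1]`,
`γ = sup_{x} |Ω(x) − Ω̄| / (Kp)`, `q ≥ 1`, `κ = Kpqγ` and `u(x) = arcsin((Ω(x) − Ω̄)/κ)`.
If `qγ = ∫₀¹ √(1 − ((Ω(y) − Ω̄)/κ)²) dy`, then `θ(x,t) = Ω̄ t + u(x)` satisfies
`∂θ/∂t(x,t) = Ω(x) + Kp ∫₀¹ sin(θ(y,t) − θ(x,t)) dy` for all `x ∈ [0,1]`, `t ∈ ℝ`. -/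
theorem stmt_3 (Ω : ℝ → ℝ)
    (hΩ_cont : ContinuousOn Ω (Set.Icc (0:ℝ) 1))
    (hΩ_range : ∀ x ∈ Set.Icc (0:ℝ) 1, Ω x ∈ Set.Icc (-1:ℝ) 1)
    (hΩ_noncst : ∃ x ∈ Set.Icc (0:ℝ) 1, ∃ y ∈ Set.Icc (0:ℝ) 1, Ω x ≠ Ω y)
    (Ωbar : ℝ) (hΩbar : Ωbar = ∫ x in (0:ℝ)..1, Ω x)
    (K p : ℝ) (hK : 0 < K) (hp : p ∈ Set.Ioc (0:ℝ) 1)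
    (γ : ℝ) (hγ : γ = sSup ((fun x => |Ω x - Ωbar|) '' Set.Icc (0:ℝ) 1) / (K * p))
    (q : ℝ) (hq : 1 ≤ q)
    (κ : ℝ) (hκ : κ = K * p * q * γ)
    (u : ℝ → ℝ) (hu : ∀ x, u x = Real.arcsin ((Ω x - Ωbar) / κ))
    (hErm : q * γ = ∫ y in (0:ℝ)..1, Real.sqrt (1 - ((Ω y - Ωbar) / κ)^2)) :
    ∀ x ∈ Set.Icc (0:ℝ) 1, ∀ t : ℝ,
      HasDerivAt (fun s : ℝ => Ωbar * s + u x)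
        (Ω x + K * p * ∫ y in (0:ℝ)..1,
          Real.sin ((Ωbar * t + u y) - (Ωbar * t + u x))) t :=
  stmt_3_general Ω hΩ_cont Ωbar hΩbar K p hK hp γ hγ q hq κ hκ u hu hErm
end

section
/- Suppose in addition that κ ≥ 1 and max_{x∈[0,1]} |Ω(x)| = 1. Then every λ in the closed interval [−KpC, −Kp√(1 − 1/κ²)·C] belongs to the spectrum of the bounded operator L on X_ℂ. -/
open MeasureTheory intervalIntegral

/-- Membership in `X_ℂ`: continuous complex-valued functions on `[0,1]` with zero mean. -/
def memXC (v : ℝ → ℂ) : Prop :=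
  ContinuousOn v (Set.Icc (0:ℝ) 1) ∧ (∫ x in (0:ℝ)..1, v x) = 0

/-- The linearization `L` at the synchronous state `u*` of the Kuramoto mean-field model on
the Erdős–Rényi graphon `W ≡ p`, acting on complex-valued functions:
`(Lv)(x) = Kp ∫₀¹ cos(u*(y) − u*(x)) (v(y) − v(x)) dy`. -/
noncomputable def LER (K p : ℝ) (ustar : ℝ → ℝ) (v : ℝ → ℂ) (x : ℝ) : ℂ :=
  ((K * p : ℝ) : ℂ) * ∫ y in (0:ℝ)..1, ((Real.cos (ustar y - ustar x) : ℝ) : ℂ) * (v y - v x)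

/-- `z` lies in the resolvent set of `L` on `X_ℂ`, expressed (equivalently, by the bounded
inverse theorem, since `L` is a bounded operator on the Banach space `X_ℂ`) as bijectivity
of `L − z` on `X_ℂ`. -/
def IsInResolventER (K p : ℝ) (ustar : ℝ → ℝ) (z : ℂ) : Prop :=
  (∀ v : ℝ → ℂ, memXC v → (∀ x ∈ Set.Icc (0:ℝ) 1, LER K p ustar v x - z * v x = 0) →
    ∀ x ∈ Set.Icc (0:ℝ) 1, v x = 0) ∧
  (∀ g : ℝ → ℂ, memXC g → ∃ v : ℝ → ℂ, memXC v ∧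
    ∀ x ∈ Set.Icc (0:ℝ) 1, LER K p ustar v x - z * v x = g x)

/-!
Since `cos (u y - u x) = cos u y cos u x + sin u y sin u x`, the operator `L` is multiplication
by `m = -Kp (C cos u* + S sin u*)` plus a rank-two operator built from `cos u*` and `sin u*`.
Oddness of `Ω` about `1/2` makes `S = ∫₀¹ sin u*` vanish, so by the intermediate value theorem
every `λ` of the interval is `m z` for some `z`. Such a value is never in the resolvent. If `m`,
`cos u*` and `sin u*` are constant near `z`, a zero-mean bump supported there is an eigenfunction.
Otherwise let `h` be the deviation of these coefficients from their values at `z`: a solution of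
`(L - λ) v = √h - mean` would force `√h ≤ const · h` near `z`, impossible where `0 < h` is small.
-/

open Set Filter Topology

theorem integral_zero_one_eq_zero_of_odd_about_half {f : ℝ → ℝ}
    (hf : ∀ x ∈ Icc (0:ℝ) 1, f (1 - x) = -f x) : ∫ x in (0:ℝ)..1, f x = 0 := by
  have hreflect : ∫ x in (0:ℝ)..1, f (1 - x) = ∫ x in (0:ℝ)..1, f x := by
    simp [integral_comp_sub_left]
  have hodd : ∫ x in (0:ℝ)..1, f (1 - x) = -∫ x in (0:ℝ)..1, f x := by
    rw [← intervalIntegral.integral_neg]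
    exact integral_congr fun x hx ↦ hf x (by rwa [uIcc_of_le zero_le_one] at hx)
  linarith

theorem exists_continuous_support_subset_integral_eq_zero {α β : ℝ} (hαβ : α < β) :
    ∃ w : ℝ → ℝ, Continuous w ∧ Function.support w ⊆ Ioo α β ∧ ∫ x, w x = 0 ∧
      ∃ x ∈ Ioo α β, w x ≠ 0 := by
  set c := 2 * Real.pi / (β - α)
  have hβα : β - α ≠ 0 := (sub_pos.2 hαβ).ne'
  have hc : c ≠ 0 := by positivity
  have hcβ : c * (β - α) = 2 * Real.pi := div_mul_cancel₀ _ hβα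
  set w : ℝ → ℝ := fun x ↦ Real.sin (c * (max α (min β x) - α))
  have hw : ∀ x ∈ Icc α β, w x = Real.sin (c * (x - α)) := fun x hx ↦ by
    simp only [w, min_eq_right hx.2, max_eq_right hx.1]
  have hsupp : Function.support w ⊆ Ioo α β := by
    refine Function.support_subset_iff'.2 fun x hx ↦ ?_
    rcases le_or_gt x α with hxα | hαx
    · simp [w, min_eq_right (hxα.trans hαβ.le), max_eq_left hxα]
    · simp [w, min_eq_left (not_lt.1 fun hxβ ↦ hx ⟨hαx, hxβ⟩), hαβ.le, hcβ]
  refine ⟨w, by fun_prop, hsupp, ?_, α + (β - α) / 4, ⟨by linarith, by linarith⟩, ?_⟩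
  · rw [← integral_eq_integral_of_support_subset (hsupp.trans Ioo_subset_Ioc_self),
      integral_congr (g := fun x ↦ Real.sin (c * (x - α))) fun x hx ↦
        hw x (by rwa [uIcc_of_le hαβ.le] at hx),
      integral_comp_sub_right (fun x ↦ Real.sin (c * x)), integral_comp_mul_left _ hc]
    simp [hcβ]
  · rw [hw _ ⟨by linarith, by linarith⟩, show c * (α + (β - α) / 4 - α) = Real.pi / 2 by
      simp only [c]; field_simp; ring]
    simp

theorem Filter.Tendsto.eventually_eq_zero_of_sqrt_le_mul {X : Type*} {l : Filter X} {h : X → ℝ}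
    {K : ℝ} (hlim : Tendsto h l (𝓝 0)) (h0 : ∀ᶠ x in l, 0 ≤ h x)
    (hle : ∀ᶠ x in l, √(h x) ≤ K * h x) : ∀ᶠ x in l, h x = 0 := by
  have hsmall : ∀ᶠ x in l, K * √(h x) < 1 := by
    have hK : Tendsto (fun x ↦ K * √(h x)) l (𝓝 0) := by
      simpa using (hlim.sqrt).const_mul K
    exact hK.eventually_lt_const one_pos
  filter_upwards [h0, hle, hsmall] with x h0 hle hsmall
  have hle' : √(h x) ≤ K * √(h x) ^ 2 := by rwa [Real.sq_sqrt h0]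
  have hs : √(h x) = 0 := by nlinarith [Real.sqrt_nonneg (h x)]
  rwa [Real.sqrt_eq_zero h0] at hs

theorem exists_Icc_subset_of_eventually_nhdsWithin {a b z : ℝ} (hab : a < b) (hz : z ∈ Icc a b)
    {P : ℝ → Prop} (hP : ∀ᶠ x in 𝓝[Icc a b] z, P x) :
    ∃ α β, α < β ∧ Icc α β ⊆ Icc a b ∧ ∀ x ∈ Icc α β, P x := by
  obtain ⟨δ, hδ, hball⟩ := Metric.mem_nhdsWithin_iff.1 hP
  refine ⟨max a (z - δ / 2), min b (z + δ / 2),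
    max_lt (lt_min hab (by linarith [hz.1])) (lt_min (by linarith [hz.2]) (by linarith)),
    Icc_subset_Icc (le_max_left _ _) (min_le_left _ _), fun x hx ↦ hball ⟨?_, ?_⟩⟩
  · have := le_max_right a (z - δ / 2)
    have := min_le_right b (z + δ / 2)
    rw [Metric.mem_ball, Real.dist_eq, abs_lt]
    constructor <;> linarith [hx.1, hx.2]
  · exact ⟨(le_max_left _ _).trans hx.1, hx.2.trans (min_le_left _ _)⟩

theorem memXC_ofReal_sub_integral {f : ℝ → ℝ} (hf : ContinuousOn f (Icc 0 1)) :
    memXC fun x ↦ (f x : ℂ) - ↑(∫ y in (0:ℝ)..1, f y) := by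
  refine ⟨by fun_prop, ?_⟩
  rw [intervalIntegral.integral_sub ?_ intervalIntegrable_const, intervalIntegral.integral_ofReal]
  · simp
  · exact (Complex.continuous_ofReal.comp_continuousOn hf).intervalIntegrable_of_Icc zero_le_one

def IsInResolvent (T : (ℝ → ℂ) → ℝ → ℂ) (z : ℂ) : Prop :=
  (∀ v : ℝ → ℂ, memXC v → (∀ x ∈ Icc (0:ℝ) 1, T v x - z * v x = 0) →
    ∀ x ∈ Icc (0:ℝ) 1, v x = 0) ∧
  (∀ g : ℝ → ℂ, memXC g → ∃ v : ℝ → ℂ, memXC v ∧ ∀ x ∈ Icc (0:ℝ) 1, T v x - z * v x = g x)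

section MulAddFiniteRank

variable {ι : Type*} [Fintype ι]

def IsMulAddFiniteRank (T : (ℝ → ℂ) → ℝ → ℂ) (m : ℝ → ℂ) (c : ℂ) (φ : ι → ℝ → ℂ) : Prop :=
  ∀ v : ℝ → ℂ, ContinuousOn v (Icc 0 1) → ∀ x ∈ Icc (0:ℝ) 1,
    T v x = m x * v x + c * ∑ i, φ i x * ∫ y in (0:ℝ)..1, φ i y * v y

noncomputable def coeffDeviation (m : ℝ → ℂ) (φ : ι → ℝ → ℂ) (z x : ℝ) : ℝ :=
  ‖m x - m z‖ + ∑ i, ‖φ i x - φ i z‖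

variable {T : (ℝ → ℂ) → ℝ → ℂ} {m : ℝ → ℂ} {c : ℂ} {φ : ι → ℝ → ℂ} {z : ℝ}

theorem coeffDeviation_nonneg (x : ℝ) : 0 ≤ coeffDeviation m φ z x := by
  unfold coeffDeviation; positivity

theorem coeffDeviation_self : coeffDeviation m φ z z = 0 := by
  simp [coeffDeviation]

theorem coeffDeviation_eq_zero {x : ℝ} (h : coeffDeviation m φ z x = 0) :
    m x = m z ∧ ∀ i, φ i x = φ i z := by
  have hsum := Finset.sum_nonneg fun i (_ : i ∈ Finset.univ) ↦ norm_nonneg (φ i x - φ i z)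
  rw [coeffDeviation, add_eq_zero_iff_of_nonneg (norm_nonneg _) hsum,
    Finset.sum_eq_zero_iff_of_nonneg fun i _ ↦ norm_nonneg _] at h
  exact ⟨sub_eq_zero.1 (norm_eq_zero.1 h.1),
    fun i ↦ sub_eq_zero.1 (norm_eq_zero.1 (h.2 i (Finset.mem_univ i)))⟩

theorem continuousOn_coeffDeviation (hm : ContinuousOn m (Icc 0 1))
    (hφ : ∀ i, ContinuousOn (φ i) (Icc 0 1)) : ContinuousOn (coeffDeviation m φ z) (Icc 0 1) := by
  unfold coeffDeviation
  fun_prop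

theorem IsMulAddFiniteRank.exists_eigenfunction (hT : IsMulAddFiniteRank T m c φ) {α β : ℝ}
    (hαβ : α < β) (hsub : Icc α β ⊆ Icc 0 1)
    (hconst : ∀ x ∈ Icc α β, m x = m z ∧ ∀ i, φ i x = φ i z) :
    ∃ v, memXC v ∧ (∀ x ∈ Icc (0:ℝ) 1, T v x - m z * v x = 0) ∧ ∃ x ∈ Icc (0:ℝ) 1, v x ≠ 0 := by
  obtain ⟨w, hw, hsupp, hint, x₀, hx₀, hwx₀⟩ :=
    exists_continuous_support_subset_integral_eq_zero hαβ
  set v : ℝ → ℂ := fun x ↦ (w x : ℂ)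
  have hv : ContinuousOn v (Icc 0 1) := by fun_prop
  have hIoo : Ioo α β ⊆ Ioc 0 1 := fun x hx ↦
    ⟨(hsub (left_mem_Icc.2 hαβ.le)).1.trans_lt hx.1, (hsub (Ioo_subset_Icc_self hx)).2⟩
  have hv_int : ∫ x in (0:ℝ)..1, v x = 0 := by
    rw [intervalIntegral.integral_ofReal,
      integral_eq_integral_of_support_subset (hsupp.trans hIoo), hint, Complex.ofReal_zero]
  have hfreeze : ∀ q : ℝ → ℂ, (∀ x ∈ Icc α β, q x = q z) → ∀ x, q x * v x = q z * v x := by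
    intro q hq x
    by_cases hx : w x = 0
    · simp [v, hx]
    · rw [hq x (Ioo_subset_Icc_self (hsupp hx))]
  have horth : ∀ i, ∫ y in (0:ℝ)..1, φ i y * v y = 0 := fun i ↦ by
    simp_rw [hfreeze (φ i) fun x hx ↦ (hconst x hx).2 i, intervalIntegral.integral_const_mul,
      hv_int, mul_zero]
  refine ⟨v, ⟨hv, hv_int⟩, fun x hx ↦ ?_, x₀, hsub (Ioo_subset_Icc_self hx₀), by simpa [v]⟩
  rw [hT v hv x hx, hfreeze m fun x hx ↦ (hconst x hx).1]
  simp [horth]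

theorem IsMulAddFiniteRank.eventually_coeffDeviation_eq_zero (hT : IsMulAddFiniteRank T m c φ)
    (hm : ContinuousOn m (Icc 0 1)) (hφ : ∀ i, ContinuousOn (φ i) (Icc 0 1))
    (hz : z ∈ Icc (0:ℝ) 1) {v : ℝ → ℂ} (hv : ContinuousOn v (Icc 0 1)) {a : ℂ}
    (hsol : ∀ x ∈ Icc (0:ℝ) 1, T v x - m z * v x = √(coeffDeviation m φ z x) + a) :
    ∀ᶠ x in 𝓝[Icc 0 1] z, coeffDeviation m φ z x = 0 := by
  set h := coeffDeviation m φ z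
  obtain ⟨M, hM⟩ := isCompact_Icc.exists_bound_of_continuousOn hv
  have hM0 : 0 ≤ M := (norm_nonneg _).trans (hM z hz)
  set B : ι → ℂ := fun i ↦ ∫ y in (0:ℝ)..1, φ i y * v y
  -- Subtracting the equation at `z`, where the deviation vanishes, eliminates `a`.
  have hdiff : ∀ x ∈ Icc (0:ℝ) 1,
      (√(h x) : ℂ) = (m x - m z) * v x + c * ∑ i, (φ i x - φ i z) * B i := by
    intro x hx
    have hsolz := hsol z hz
    rw [hT v hv z hz, show h z = 0 from coeffDeviation_self, Real.sqrt_zero, Complex.ofReal_zero,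
      zero_add] at hsolz
    have hsolx := hsol x hx
    rw [hT v hv x hx] at hsolx
    simp only [sub_mul, Finset.sum_sub_distrib]
    linear_combination -hsolx + hsolz
  have hbound : ∀ x ∈ Icc (0:ℝ) 1, √(h x) ≤ (M + ‖c‖ * ∑ i, ‖B i‖) * h x := by
    intro x hx
    have hB : ∀ i, ‖B i‖ ≤ ∑ j, ‖B j‖ := fun i ↦
      Finset.single_le_sum (fun j _ ↦ norm_nonneg (B j)) (Finset.mem_univ i)
    have hsum : ‖∑ i, (φ i x - φ i z) * B i‖ ≤ (∑ j, ‖B j‖) * ∑ i, ‖φ i x - φ i z‖ := by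
      rw [Finset.mul_sum]
      refine (norm_sum_le _ _).trans (Finset.sum_le_sum fun i _ ↦ ?_)
      rw [norm_mul, mul_comm]
      exact mul_le_mul_of_nonneg_right (hB i) (norm_nonneg _)
    have hdev : h x = ‖m x - m z‖ + ∑ i, ‖φ i x - φ i z‖ := rfl
    have hφdev : 0 ≤ ∑ i, ‖φ i x - φ i z‖ := by positivity
    have hBsum : 0 ≤ ‖c‖ * ∑ j, ‖B j‖ := by positivity
    calc √(h x) = ‖(√(h x) : ℂ)‖ := by
          rw [Complex.norm_real, Real.norm_of_nonneg (Real.sqrt_nonneg _)]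
      _ ≤ ‖m x - m z‖ * M + ‖c‖ * ((∑ j, ‖B j‖) * ∑ i, ‖φ i x - φ i z‖) := by
        rw [hdiff x hx]
        refine norm_add_le_of_le (norm_mul_le_of_le le_rfl (hM x hx)) ?_
        rw [norm_mul]
        gcongr
      _ ≤ (M + ‖c‖ * ∑ i, ‖B i‖) * h x := by
        rw [hdev]
        nlinarith [mul_nonneg hM0 hφdev, mul_nonneg hBsum (norm_nonneg (m x - m z))]
  have hlim : Tendsto h (𝓝[Icc 0 1] z) (𝓝 0) := by
    have hcont := continuousOn_coeffDeviation hm hφ (z := z) z hz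
    rwa [ContinuousWithinAt, coeffDeviation_self] at hcont
  exact hlim.eventually_eq_zero_of_sqrt_le_mul (Eventually.of_forall coeffDeviation_nonneg)
    (eventually_mem_nhdsWithin.mono hbound)

theorem IsMulAddFiniteRank.not_isInResolvent (hT : IsMulAddFiniteRank T m c φ)
    (hm : ContinuousOn m (Icc 0 1)) (hφ : ∀ i, ContinuousOn (φ i) (Icc 0 1))
    (hz : z ∈ Icc (0:ℝ) 1) : ¬ IsInResolvent T (m z) := by
  rintro ⟨hinj, hsurj⟩
  by_cases hloc : ∀ᶠ x in 𝓝[Icc 0 1] z, coeffDeviation m φ z x = 0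
  · obtain ⟨α, β, hαβ, hsub, hdev⟩ := exists_Icc_subset_of_eventually_nhdsWithin zero_lt_one hz hloc
    obtain ⟨v, hv, heig, x, hx, hvx⟩ :=
      hT.exists_eigenfunction hαβ hsub fun x hx ↦ coeffDeviation_eq_zero (hdev x hx)
    exact hvx (hinj v hv heig x hx)
  · obtain ⟨v, hv, hsol⟩ :=
      hsurj _ (memXC_ofReal_sub_integral (continuousOn_coeffDeviation hm hφ (z := z)).sqrt)
    exact hloc (hT.eventually_coeffDeviation_eq_zero hm hφ hz hv.1 fun x hx ↦ by
      rw [hsol x hx, sub_eq_add_neg])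

end MulAddFiniteRank

theorem mul_integral_sum_mul_sub_eq {ι : Type*} [Fintype ι] (c : ℂ) {φ : ι → ℝ → ℂ}
    (hφ : ∀ i, ContinuousOn (φ i) (Icc 0 1)) {v : ℝ → ℂ} (hv : ContinuousOn v (Icc 0 1))
    (x : ℝ) :
    c * ∫ y in (0:ℝ)..1, (∑ i, φ i y * φ i x) * (v y - v x) =
      -(c * ∑ i, φ i x * ∫ y in (0:ℝ)..1, φ i y) * v x +
        c * ∑ i, φ i x * ∫ y in (0:ℝ)..1, φ i y * v y := by
  have hint : ∀ f : ℝ → ℂ, ContinuousOn f (Icc 0 1) → IntervalIntegrable f volume 0 1 :=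
    fun f hf ↦ hf.intervalIntegrable_of_Icc zero_le_one
  have hsplit : ∀ y, (∑ i, φ i y * φ i x) * (v y - v x) =
      ∑ i, (φ i x * (φ i y * v y) - φ i x * v x * φ i y) := fun y ↦ by
    rw [Finset.sum_mul]
    exact Finset.sum_congr rfl fun i _ ↦ by ring
  have hterm : ∀ i, ∫ y in (0:ℝ)..1, (φ i x * (φ i y * v y) - φ i x * v x * φ i y) =
      φ i x * (∫ y in (0:ℝ)..1, φ i y * v y) - φ i x * v x * ∫ y in (0:ℝ)..1, φ i y := fun i ↦ by
    rw [intervalIntegral.integral_sub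
      (hint (fun y ↦ φ i x * (φ i y * v y)) (continuousOn_const.mul ((hφ i).mul hv)))
      (hint (fun y ↦ φ i x * v x * φ i y) (continuousOn_const.mul (hφ i))),
      intervalIntegral.integral_const_mul,
      intervalIntegral.integral_const_mul]
  simp_rw [hsplit]
  rw [intervalIntegral.integral_finsetSum fun i _ ↦
    hint (fun y ↦ φ i x * (φ i y * v y) - φ i x * v x * φ i y)
      ((continuousOn_const.mul ((hφ i).mul hv)).sub (continuousOn_const.mul (hφ i)))]
  have hpull : ∑ i, φ i x * v x * ∫ y in (0:ℝ)..1, φ i y =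
      (∑ i, φ i x * ∫ y in (0:ℝ)..1, φ i y) * v x := by
    rw [Finset.sum_mul]
    exact Finset.sum_congr rfl fun i _ ↦ by ring
  simp_rw [hterm]
  rw [Finset.sum_sub_distrib, hpull]
  ring

noncomputable def cosSinModes (u : ℝ → ℝ) : Fin 2 → ℝ → ℂ :=
  ![fun y ↦ (Real.cos (u y) : ℂ), fun y ↦ (Real.sin (u y) : ℂ)]

theorem continuousOn_cosSinModes {u : ℝ → ℝ} (hu : ContinuousOn u (Icc 0 1)) :
    ∀ i, ContinuousOn (cosSinModes u i) (Icc 0 1) :=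
  Fin.forall_fin_two.2
    ⟨by simp only [cosSinModes, Matrix.cons_val_zero]; fun_prop,
      by simp only [cosSinModes, Matrix.cons_val_one, Matrix.cons_val_zero]; fun_prop⟩

theorem isMulAddFiniteRank_LER {K p : ℝ} {u : ℝ → ℝ} (hu : ContinuousOn u (Icc 0 1)) :
    IsMulAddFiniteRank (LER K p u)
      (fun x ↦ -(((K * p : ℝ) : ℂ) * ∑ i, cosSinModes u i x * ∫ y in (0:ℝ)..1, cosSinModes u i y))
      ((K * p : ℝ) : ℂ) (cosSinModes u) := by
  intro v hv x _
  have hkernel : ∀ y,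
      ((Real.cos (u y - u x) : ℝ) : ℂ) = ∑ i, cosSinModes u i y * cosSinModes u i x := fun y ↦ by simp [cosSinModes, Real.cos_sub]
  simp_rw [LER, hkernel]
  exact mul_integral_sum_mul_sub_eq _ (continuousOn_cosSinModes hu) hv x

theorem stmt_4_general (K p : ℝ)
    (Ω : ℝ → ℝ)
    (hΩ_cont : ContinuousOn Ω (Set.Icc (0:ℝ) 1))
    (hΩ_odd : ∀ x ∈ Set.Icc (0:ℝ) 1, Ω (1 - x) = -Ω x)
    (κ : ℝ)
    (hΩ_max : ∃ x₀ ∈ Set.Icc (0:ℝ) 1, |Ω x₀| = 1)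
    (ustar : ℝ → ℝ) (hustar : ∀ x, ustar x = Real.arcsin (Ω x / κ))
    (C : ℝ) (hC : C = ∫ y in (0:ℝ)..1, Real.cos (ustar y)) :
    ∀ lam : ℝ,
      lam ∈ Set.Icc (-(K * p * C)) (-(K * p * Real.sqrt (1 - 1/κ^2) * C)) →
      ¬ IsInResolventER K p ustar (lam : ℂ) := by
  intro lam hlam
  have hu : ContinuousOn ustar (Icc 0 1) := by
    rw [funext hustar]
    exact Real.continuous_arcsin.comp_continuousOn (hΩ_cont.div_const κ)
  have hodd : ∀ x ∈ Icc (0:ℝ) 1, ustar (1 - x) = -ustar x := fun x hx ↦ by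
    rw [hustar, hustar, hΩ_odd x hx, neg_div, Real.arcsin_neg]
  have hhalf : ustar (1 / 2) = 0 := by
    have h := hodd (1 / 2) ⟨by norm_num, by norm_num⟩
    norm_num at h
    linarith
  have hS : ∫ y in (0:ℝ)..1, Real.sin (ustar y) = 0 :=
    integral_zero_one_eq_zero_of_odd_about_half fun x hx ↦ by rw [hodd x hx, Real.sin_neg]
  obtain ⟨x₀, hx₀, hΩx₀⟩ := hΩ_max
  have hcos₀ : Real.cos (ustar x₀) = √(1 - 1 / κ ^ 2) := by
    rw [hustar, Real.cos_arcsin, div_pow, ← sq_abs, hΩx₀, one_pow]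
  obtain ⟨z, hz, hlamz⟩ : ∃ z ∈ Icc (0:ℝ) 1, -(K * p * C * Real.cos (ustar z)) = lam := by
    have hsub : uIcc (1 / 2) x₀ ⊆ Icc 0 1 := uIcc_subset_Icc ⟨by norm_num, by norm_num⟩ hx₀
    have hmem : lam ∈ uIcc (-(K * p * C * Real.cos (ustar (1 / 2))))
        (-(K * p * C * Real.cos (ustar x₀))) := by
      rw [hhalf, hcos₀, Real.cos_zero]
      exact Icc_subset_uIcc (by rwa [mul_one, mul_right_comm (K * p) C])
    have hu' := hu.mono hsub
    obtain ⟨z, hz, hfz⟩ := intermediate_value_uIcc (a := 1 / 2) (b := x₀)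
      (f := fun x ↦ -(K * p * C * Real.cos (ustar x))) (by fun_prop) hmem
    exact ⟨z, hsub hz, hfz⟩
  have hlam_eq : (lam : ℂ) = -(((K * p : ℝ) : ℂ) *
      ∑ i, cosSinModes ustar i z * ∫ y in (0:ℝ)..1, cosSinModes ustar i y) := by
    simp only [cosSinModes, Fin.sum_univ_two, Matrix.cons_val_zero, Matrix.cons_val_one,
      intervalIntegral.integral_ofReal, hS, ← hC, ← hlamz]
    push_cast
    ring
  rw [hlam_eq]
  exact (isMulAddFiniteRank_LER hu).not_isInResolvent
    (continuousOn_const.mul (continuousOn_finsetSum _ fun i _ ↦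
      (continuousOn_cosSinModes hu i).mul continuousOn_const)).neg
    (continuousOn_cosSinModes hu) hz

/-- In the Erdős–Rényi Kuramoto setting (`Ω : [0,1] → [−1,1]` continuous and
odd about `x = 1/2`, `K > 0`, `p ∈ (0,1]`, `κ ≥ 1`, `u*(x) = arcsin(Ω(x)/κ)`,
`C = ∫₀¹ cos(u*(y)) dy`), if moreover `max_{x∈[0,1]} |Ω(x)| = 1`, then every
`λ ∈ [−KpC, −Kp√(1 − 1/κ²)·C]` belongs to the spectrum of `L` on `X_ℂ`, i.e. `L − λ` is
not bijective on `X_ℂ`. -/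
theorem stmt_4 (K p : ℝ) (hK : 0 < K) (hp : p ∈ Set.Ioc (0:ℝ) 1)
    (Ω : ℝ → ℝ)
    (hΩ_cont : ContinuousOn Ω (Set.Icc (0:ℝ) 1))
    (hΩ_range : ∀ x ∈ Set.Icc (0:ℝ) 1, Ω x ∈ Set.Icc (-1:ℝ) 1)
    (hΩ_odd : ∀ x ∈ Set.Icc (0:ℝ) 1, Ω (1 - x) = -Ω x)
    (κ : ℝ) (hκ : 1 ≤ κ)
    (hΩ_max : ∃ x₀ ∈ Set.Icc (0:ℝ) 1, |Ω x₀| = 1)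
    (ustar : ℝ → ℝ) (hustar : ∀ x, ustar x = Real.arcsin (Ω x / κ))
    (C : ℝ) (hC : C = ∫ y in (0:ℝ)..1, Real.cos (ustar y)) :
    ∀ lam : ℝ,
      lam ∈ Set.Icc (-(K * p * C)) (-(K * p * Real.sqrt (1 - 1/κ^2) * C)) →
      ¬ IsInResolventER K p ustar (lam : ℂ) :=
  stmt_4_general K p Ω hΩ_cont hΩ_odd κ hΩ_max ustar hustar C hC
end

section
/- Suppose in addition that κ > 1 and that (1/(κC)) ∫₀¹ Ω(y)² / √(κ² − Ω(y)²) dy = 1. Then the function v(x) = Ω(x)/√(1 − Ω(x)²/κ²) is a nonzero element of X (it is continuous with ∫₀¹ v(x) dx = 0) and satisfies Lv = 0; in particular 0 is an eigenvalue of L : X → X. -/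
/-!
Since `sin u* = Ω/κ`, the candidate is `v = κ tan u*`. Expanding `cos (u*(y) - u*(x))` and using
`tan u* · cos u* = sin u*`, the integral in `(Lv)(x)`, divided by `κ`, becomes
`(cos u*(x) - sin u*(x) tan u*(x)) ∫ sin u* + sin u*(x) (∫ sin u* tan u* - ∫ cos u*)`.
Oddness of `Ω` about `1/2` makes `u*`, hence `sin u*` and `v`, odd as well, so
`∫ sin u* = ∫ v = 0`; and since `Ω² / √(κ² - Ω²) = κ sin u* tan u*`, the hypothesis on
`Ω` says exactly `∫ sin u* tan u* = C`. It also forces `C ≠ 0`, so `v` cannot vanish identically.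
-/

open MeasureTheory intervalIntegral Real Set

theorem intervalIntegral.integral_eq_zero_of_antisymm {E : Type*} [NormedAddCommGroup E]
    [NormedSpace ℝ E] {f : ℝ → E} {a b : ℝ}
    (hf : ∀ x ∈ uIcc a b, f (a + b - x) = -f x) :
    ∫ x in a..b, f x = 0 := by
  have h := integral_comp_sub_left (a := a) (b := b) f (a + b)
  rw [add_sub_cancel_right, add_sub_cancel_left, integral_congr hf, integral_neg,
    neg_eq_iff_add_eq_zero, ← two_smul ℝ] at h
  exact (smul_eq_zero.mp h).resolve_left two_ne_zero

theorem integral_cos_sub_mul_tan_sub_eq_zero {u : ℝ → ℝ} {a b : ℝ}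
    (hu : ContinuousOn u (uIcc a b)) (hcos : ∀ y ∈ uIcc a b, cos (u y) ≠ 0)
    (hsin : ∫ y in a..b, sin (u y) = 0)
    (htan : ∫ y in a..b, sin (u y) * tan (u y) = ∫ y in a..b, cos (u y))
    {x : ℝ} (hx : cos (u x) ≠ 0) :
    ∫ y in a..b, cos (u y - u x) * (tan (u y) - tan (u x)) = 0 := by
  have hsin_cont : ContinuousOn (fun y => sin (u y)) (uIcc a b) :=
    continuous_sin.comp_continuousOn hu
  have htan_cont : ContinuousOn (fun y => tan (u y)) (uIcc a b) :=
    continuousOn_tan.comp hu hcos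
  have hsin_int : IntervalIntegrable (fun y => sin (u y)) volume a b :=
    hsin_cont.intervalIntegrable
  have hsin_tan_int : IntervalIntegrable (fun y => sin (u y) * tan (u y)) volume a b :=
    (hsin_cont.mul htan_cont).intervalIntegrable
  have hcos_int : IntervalIntegrable (fun y => cos (u y)) volume a b :=
    (continuous_cos.comp_continuousOn hu).intervalIntegrable
  calc ∫ y in a..b, cos (u y - u x) * (tan (u y) - tan (u x))
      = ∫ y in a..b, (cos (u x) - sin (u x) * tan (u x)) * sin (u y)
          + sin (u x) * (sin (u y) * tan (u y) - cos (u y)) := by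
        refine integral_congr fun y hy => ?_
        simp only [cos_sub]
        linear_combination cos (u x) * tan_mul_cos (hcos y hy) - cos (u y) * tan_mul_cos hx
    _ = (cos (u x) - sin (u x) * tan (u x)) * (∫ y in a..b, sin (u y))
          + sin (u x) * ∫ y in a..b, sin (u y) * tan (u y) - cos (u y) := by
        rw [integral_add (hsin_int.const_mul _) ((hsin_tan_int.sub hcos_int).const_mul _),
          intervalIntegral.integral_const_mul, intervalIntegral.integral_const_mul]
    _ = 0 := by
        rw [hsin, integral_sub hsin_tan_int hcos_int, htan]
        ring

theorem mul_tan_arcsin_div {κ : ℝ} (hκ : κ ≠ 0) (w : ℝ) :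
    κ * tan (arcsin (w / κ)) = w / √(1 - w ^ 2 / κ ^ 2) := by
  rw [tan_arcsin, div_pow, mul_div_assoc', mul_div_cancel₀ _ hκ]

theorem abs_div_lt_one_of_abs_lt {w κ : ℝ} (hw : |w| < κ) : |w / κ| < 1 := by
  rw [abs_div, abs_of_pos ((abs_nonneg w).trans_lt hw), div_lt_one ((abs_nonneg w).trans_lt hw)]
  exact hw

theorem cos_arcsin_div_ne_zero {w κ : ℝ} (hw : |w| < κ) : cos (arcsin (w / κ)) ≠ 0 := by
  rw [cos_arcsin]
  exact (sqrt_pos.mpr (sub_pos.mpr ((sq_lt_one_iff_abs_lt_one _).mpr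
    (abs_div_lt_one_of_abs_lt hw)))).ne'

theorem sq_div_sqrt_sq_sub_sq_eq {w κ : ℝ} (hw : |w| < κ) :
    w ^ 2 / √(κ ^ 2 - w ^ 2) = κ * (sin (arcsin (w / κ)) * tan (arcsin (w / κ))) := by
  have hκ : 0 < κ := (abs_nonneg w).trans_lt hw
  obtain ⟨hlo, hhi⟩ := abs_le.mp (abs_div_lt_one_of_abs_lt hw).le
  have hsplit : κ ^ 2 - w ^ 2 = κ ^ 2 * (1 - w ^ 2 / κ ^ 2) := by
    field_simp
  rw [sin_arcsin hlo hhi, mul_left_comm, mul_tan_arcsin_div hκ.ne', hsplit,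
    sqrt_mul (sq_nonneg κ), sqrt_sq hκ.le, div_mul_div_comm, sq]

theorem stmt_5_general (K p : ℝ)
    (Ω : ℝ → ℝ)
    (hΩ_cont : ContinuousOn Ω (Set.Icc (0:ℝ) 1))
    (hΩ_range : ∀ x ∈ Set.Icc (0:ℝ) 1, Ω x ∈ Set.Icc (-1:ℝ) 1)
    (hΩ_odd : ∀ x ∈ Set.Icc (0:ℝ) 1, Ω (1 - x) = -Ω x)
    (κ : ℝ) (hκ : 1 < κ)
    (ustar : ℝ → ℝ) (hustar : ∀ x, ustar x = Real.arcsin (Ω x / κ))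
    (C : ℝ) (hC : C = ∫ y in (0:ℝ)..1, Real.cos (ustar y))
    (hzero : (1 / (κ * C)) *
        ∫ y in (0:ℝ)..1, (Ω y)^2 / Real.sqrt (κ^2 - (Ω y)^2) = 1)
    (v : ℝ → ℝ) (hv : ∀ x, v x = Ω x / Real.sqrt (1 - (Ω x)^2 / κ^2)) :
    ContinuousOn v (Set.Icc (0:ℝ) 1)
    ∧ (∫ x in (0:ℝ)..1, v x) = 0
    ∧ (∃ x ∈ Set.Icc (0:ℝ) 1, v x ≠ 0)
    ∧ ∀ x ∈ Set.Icc (0:ℝ) 1,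
        K * p * ∫ y in (0:ℝ)..1, Real.cos (ustar y - ustar x) * (v y - v x) = 0 := by
  have h01 : uIcc (0:ℝ) 1 = Icc 0 1 := uIcc_of_le zero_le_one
  have hκ0 : κ ≠ 0 := by positivity
  have hΩκ : ∀ x ∈ uIcc (0:ℝ) 1, |Ω x| < κ := fun x hx =>
    (abs_le.mpr (hΩ_range x (h01 ▸ hx))).trans_lt hκ
  have hcos : ∀ x ∈ uIcc (0:ℝ) 1, cos (ustar x) ≠ 0 := fun x hx =>
    hustar x ▸ cos_arcsin_div_ne_zero (hΩκ x hx)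
  have hu_cont : ContinuousOn ustar (Icc 0 1) :=
    funext hustar ▸ continuous_arcsin.comp_continuousOn (hΩ_cont.div_const κ)
  have hu_anti : ∀ x ∈ uIcc (0:ℝ) 1, ustar (0 + 1 - x) = -ustar x := fun x hx => by
    rw [zero_add, hustar, hustar, hΩ_odd x (h01 ▸ hx), neg_div, arcsin_neg]
  have hv_tan : ∀ x, v x = κ * tan (ustar x) := fun x => by
    rw [hv, hustar, mul_tan_arcsin_div hκ0]
  have hκC : κ * C ≠ 0 :=
    inv_eq_zero.not.mp (one_div (κ * C) ▸ left_ne_zero_of_mul_eq_one hzero)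
  have hsin_tan : ∫ y in (0:ℝ)..1, sin (ustar y) * tan (ustar y) = C := by
    rw [one_div, inv_mul_eq_one₀ hκC,
      integral_congr fun y hy => sq_div_sqrt_sq_sub_sq_eq (hΩκ y hy),
      intervalIntegral.integral_const_mul] at hzero
    simpa only [← hustar] using (mul_left_cancel₀ hκ0 hzero).symm
  refine ⟨?_, ?_, ?_, fun x hx => ?_⟩
  · exact funext hv_tan ▸ continuousOn_const.mul (continuousOn_tan.comp hu_cont (h01 ▸ hcos))
  · exact integral_eq_zero_of_antisymm fun x hx => by
      rw [hv_tan, hv_tan, hu_anti x hx, tan_neg, mul_neg]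
  · by_contra! hv0
    have htan0 : ∀ y ∈ uIcc (0:ℝ) 1, sin (ustar y) * tan (ustar y) = 0 := fun y hy => by
      rw [(mul_eq_zero.mp ((hv_tan y).symm.trans (hv0 y (h01 ▸ hy)))).resolve_left hκ0, mul_zero]
    rw [integral_congr htan0, intervalIntegral.integral_zero] at hsin_tan
    exact hκC (by rw [← hsin_tan, mul_zero])
  · have hsin_int : ∫ y in (0:ℝ)..1, sin (ustar y) = 0 :=
      integral_eq_zero_of_antisymm fun y hy => by rw [hu_anti y hy, sin_neg]
    simp_rw [hv_tan, ← mul_sub, mul_left_comm _ κ]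
    rw [intervalIntegral.integral_const_mul, integral_cos_sub_mul_tan_sub_eq_zero (h01 ▸ hu_cont)
      hcos hsin_int (hsin_tan.trans hC) (hcos x (h01 ▸ hx)), mul_zero, mul_zero]

/-- In the Erdős–Rényi Kuramoto setting (`Ω : [0,1] → [−1,1]` continuous and
odd about `x = 1/2`, `K > 0`, `p ∈ (0,1]`, `κ > 1`, `u*(x) = arcsin(Ω(x)/κ)`,
`C = ∫₀¹ cos(u*(y)) dy`, `(Lv)(x) = Kp ∫₀¹ cos(u*(y) − u*(x))(v(y) − v(x)) dy`), if
`(1/(κC)) ∫₀¹ Ω(y)²/√(κ² − Ω(y)²) dy = 1`, then `v(x) = Ω(x)/√(1 − Ω(x)²/κ²)` is a nonzero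
element of `X` (continuous on `[0,1]` with `∫₀¹ v = 0`) satisfying `Lv = 0` on `[0,1]`;
in particular `0` is an eigenvalue of `L : X → X`. -/
theorem stmt_5 (K p : ℝ) (hK : 0 < K) (hp : p ∈ Set.Ioc (0:ℝ) 1)
    (Ω : ℝ → ℝ)
    (hΩ_cont : ContinuousOn Ω (Set.Icc (0:ℝ) 1))
    (hΩ_range : ∀ x ∈ Set.Icc (0:ℝ) 1, Ω x ∈ Set.Icc (-1:ℝ) 1)
    (hΩ_odd : ∀ x ∈ Set.Icc (0:ℝ) 1, Ω (1 - x) = -Ω x)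
    (κ : ℝ) (hκ : 1 < κ)
    (ustar : ℝ → ℝ) (hustar : ∀ x, ustar x = Real.arcsin (Ω x / κ))
    (C : ℝ) (hC : C = ∫ y in (0:ℝ)..1, Real.cos (ustar y))
    (hzero : (1 / (κ * C)) *
        ∫ y in (0:ℝ)..1, (Ω y)^2 / Real.sqrt (κ^2 - (Ω y)^2) = 1)
    (v : ℝ → ℝ) (hv : ∀ x, v x = Ω x / Real.sqrt (1 - (Ω x)^2 / κ^2)) :
    ContinuousOn v (Set.Icc (0:ℝ) 1)
    ∧ (∫ x in (0:ℝ)..1, v x) = 0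
    ∧ (∃ x ∈ Set.Icc (0:ℝ) 1, v x ≠ 0)
    ∧ ∀ x ∈ Set.Icc (0:ℝ) 1,
        K * p * ∫ y in (0:ℝ)..1, Real.cos (ustar y - ustar x) * (v y - v x) = 0 :=
  stmt_5_general K p Ω hΩ_cont hΩ_range hΩ_odd κ hκ ustar hustar C hC hzero v hv
end

section
/- Suppose in addition that κ > 1. Then the spectrum of L on X_ℂ is contained in the real line, and if moreover (1/(κC)) ∫₀¹ Ω(y)² / √(κ² − Ω(y)²) dy < 1, then the spectrum of L on X_ℂ is contained in {z ∈ ℂ : Re z < 0} (i.e. the synchronous solution u* is spectrally stable). -/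
open MeasureTheory intervalIntegral

/-!
Because `u*` is odd about `1/2`, `∫ sin u* = 0`, and expanding `cos (u*(y) - u*(x))` shows that
`L - z` is the rank-two operator `Kp (cos u* ⊗ cos u* + sin u* ⊗ sin u*)` minus multiplication by
`μ = Kp C cos u* + z`. Writing `v = (Kp (a cos u* + b sin u*) - g) / μ`, the equation
`(L - z) v = g` on `X_ℂ` reduces to two scalar equations, decoupled by the parity of `u*`, which
are uniquely solvable as soon as `μ` has no zero, `Kp ∫ cos u* / μ ≠ 0` (this comes from the
zero-mean constraint) and `Kp ∫ sin² u* / μ ≠ 1`.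

For non-real `z`, `μ` has constant imaginary part `Im z`, so `Im ∫ w / μ = -Im z ∫ w / |μ|²` for
real `w`; with `w = cos u* > 0` and `w = sin² u* ≥ 0` this rules out both degeneracies. For real
`z ≥ 0` everything is positive and `Kp ∫ sin² u* / μ ≤ C⁻¹ ∫ sin² u* / cos u*`, which is the
left-hand side of the stability criterion.
-/

open Set Real

theorem integral_congr_Icc {E : Type*} [NormedAddCommGroup E] [NormedSpace ℝ E] {a b : ℝ}
    {f g : ℝ → E} (hab : a ≤ b) (h : EqOn f g (Icc a b)) :
    ∫ x in a..b, f x = ∫ x in a..b, g x :=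
  integral_congr (by rwa [uIcc_of_le hab])

theorem integral_eq_zero_of_odd_about_midpoint {E : Type*} [NormedAddCommGroup E]
    [NormedSpace ℝ E] {a b : ℝ} {f : ℝ → E} (hab : a ≤ b)
    (hf : ∀ x ∈ Icc a b, f (a + b - x) = -f x) : ∫ x in a..b, f x = 0 := by
  have hreflect : ∫ x in a..b, f (a + b - x) = ∫ x in a..b, f x := by
    simp [integral_comp_sub_left f (a + b)]
  have hneg : ∫ x in a..b, f (a + b - x) = -∫ x in a..b, f x := by
    rw [← intervalIntegral.integral_neg]
    exact integral_congr_Icc hab hf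
  have htwice : (2 : ℝ) • ∫ x in a..b, f x = 0 := by
    rw [two_smul]
    nth_rw 1 [← hreflect, hneg]
    exact neg_add_cancel _
  exact (smul_eq_zero.mp htwice).resolve_left two_ne_zero

section WeightedIntegrals

variable {a b t : ℝ} {w : ℝ → ℝ} {μ : ℝ → ℂ}

theorem im_integral_ofReal_div (hab : a ≤ b) (hw : ContinuousOn w (Icc a b))
    (hμ : ContinuousOn μ (Icc a b)) (hμ0 : ∀ x ∈ Icc a b, μ x ≠ 0)
    (hμt : ∀ x ∈ Icc a b, (μ x).im = t) :
    (∫ x in a..b, (w x : ℂ) / μ x).im = -t * ∫ x in a..b, w x / Complex.normSq (μ x) := by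
  have hint : IntervalIntegrable (fun x => (w x : ℂ) / μ x) volume a b :=
    ((Complex.continuous_ofReal.comp_continuousOn hw).div hμ hμ0).intervalIntegrable_of_Icc hab
  rw [← Complex.imCLM_apply, ← Complex.imCLM.intervalIntegral_comp_comm hint,
    ← intervalIntegral.integral_const_mul]
  refine integral_congr_Icc hab fun x hx => ?_
  simp only [Complex.imCLM_apply, Complex.div_im, Complex.ofReal_im, Complex.ofReal_re, hμt x hx,
    zero_mul, zero_div, zero_sub]
  ring

theorem integral_ofReal_div_ne_zero (hab : a < b) (hw : ContinuousOn w (Icc a b))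
    (hw0 : ∀ x ∈ Icc a b, 0 < w x) (hμ : ContinuousOn μ (Icc a b))
    (hμ0 : ∀ x ∈ Icc a b, μ x ≠ 0) (ht : t ≠ 0) (hμt : ∀ x ∈ Icc a b, (μ x).im = t) :
    ∫ x in a..b, (w x : ℂ) / μ x ≠ 0 := by
  have hpos : 0 < ∫ x in a..b, w x / Complex.normSq (μ x) := by
    refine intervalIntegral_pos_of_pos_on ?_ (fun x hx => ?_) hab
    · exact (hw.div (Complex.continuous_normSq.comp_continuousOn hμ) fun x hx =>
        (Complex.normSq_pos.mpr (hμ0 x hx)).ne').intervalIntegrable_of_Icc hab.le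
    · have hx' := Ioo_subset_Icc_self hx
      exact div_pos (hw0 x hx') (Complex.normSq_pos.mpr (hμ0 x hx'))
  intro h
  have him := im_integral_ofReal_div hab.le hw hμ hμ0 hμt
  rw [h, Complex.zero_im] at him
  exact mul_ne_zero (neg_ne_zero.mpr ht) hpos.ne' him.symm

theorem integral_ofReal_div_eq_zero_of_im_eq_zero (hab : a ≤ b) (hw : ContinuousOn w (Icc a b))
    (hw0 : ∀ x ∈ Icc a b, 0 ≤ w x) (hμ : ContinuousOn μ (Icc a b))
    (hμ0 : ∀ x ∈ Icc a b, μ x ≠ 0) (ht : t ≠ 0) (hμt : ∀ x ∈ Icc a b, (μ x).im = t)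
    (him : (∫ x in a..b, (w x : ℂ) / μ x).im = 0) : ∫ x in a..b, (w x : ℂ) / μ x = 0 := by
  set q : ℝ → ℝ := fun x => w x / Complex.normSq (μ x)
  have hq_int : ∫ x in a..b, q x = 0 := by
    have h := im_integral_ofReal_div hab hw hμ hμ0 hμt
    rw [him] at h
    exact (mul_eq_zero.mp h.symm).resolve_left (neg_ne_zero.mpr ht)
  have hq_ae : ∀ᵐ x, x ∈ uIoc a b → q x = 0 := by
    have hq_nonneg : 0 ≤ᵐ[volume.restrict (Ioc a b)] q :=
      ae_restrict_of_forall_mem measurableSet_Ioc fun x hx =>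
        div_nonneg (hw0 x (Ioc_subset_Icc_self hx)) (Complex.normSq_nonneg _)
    have hq_cont : ContinuousOn q (Icc a b) := hw.div
      (Complex.continuous_normSq.comp_continuousOn hμ) fun x hx =>
        (Complex.normSq_pos.mpr (hμ0 x hx)).ne'
    rw [uIoc_of_le hab, ← ae_restrict_iff' measurableSet_Ioc]
    exact (integral_eq_zero_iff_of_le_of_nonneg_ae hab hq_nonneg
      (hq_cont.intervalIntegrable_of_Icc hab)).mp hq_int
  calc ∫ x in a..b, (w x : ℂ) / μ x = ∫ x in a..b, (q x : ℂ) * (starRingEnd ℂ) (μ x) :=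
        integral_congr fun x _ => by
          simp only [q, div_eq_mul_inv, Complex.inv_def]
          push_cast
          ring
    _ = ∫ _ in a..b, (0 : ℂ) := integral_congr_ae (hq_ae.mono fun x hx hxI => by simp [hx hxI])
    _ = 0 := integral_zero

end WeightedIntegrals

section RankTwo

variable {k z : ℂ} {c s μ g : ℝ → ℂ}

noncomputable def rankTwoSubMul (k : ℂ) (c s μ v : ℝ → ℂ) (x : ℝ) : ℂ :=
  k * (c x * (∫ y in (0:ℝ)..1, c y * v y) + s x * ∫ y in (0:ℝ)..1, s y * v y) - μ x * v x

theorem integral_mul_rankTwo_div (hc : ContinuousOn c (Icc 0 1)) (hs : ContinuousOn s (Icc 0 1))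
    (hμ : ContinuousOn μ (Icc 0 1)) (hμ0 : ∀ x ∈ Icc (0:ℝ) 1, μ x ≠ 0)
    (hg : ContinuousOn g (Icc 0 1)) {φ : ℝ → ℂ} (hφ : ContinuousOn φ (Icc 0 1)) (a b : ℂ) :
    ∫ y in (0:ℝ)..1, φ y * ((k * (a * c y + b * s y) - g y) / μ y)
      = a * (k * ∫ y in (0:ℝ)..1, φ y * c y / μ y) + b * (k * ∫ y in (0:ℝ)..1, φ y * s y / μ y)
        - ∫ y in (0:ℝ)..1, φ y * g y / μ y := by
  have hint : ∀ f : ℝ → ℂ, ContinuousOn f (Icc 0 1) →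
      IntervalIntegrable (fun y => φ y * f y / μ y) volume 0 1 := fun f hf =>
    ((hφ.mul hf).div hμ hμ0).intervalIntegrable_of_Icc zero_le_one
  calc ∫ y in (0:ℝ)..1, φ y * ((k * (a * c y + b * s y) - g y) / μ y)
      = ∫ y in (0:ℝ)..1, (a * k * (φ y * c y / μ y) + b * k * (φ y * s y / μ y)
          - φ y * g y / μ y) := by
        congr 1; ext y; ring
    _ = _ := by
        rw [intervalIntegral.integral_sub (((hint c hc).const_mul _).add ((hint s hs).const_mul _))
            (hint g hg), intervalIntegral.integral_add ((hint c hc).const_mul _)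
            ((hint s hs).const_mul _), intervalIntegral.integral_const_mul,
          intervalIntegral.integral_const_mul]
        ring

theorem eq_zero_of_rankTwoSubMul_eq_zero (hc : ContinuousOn c (Icc 0 1))
    (hs : ContinuousOn s (Icc 0 1)) (hμ : ContinuousOn μ (Icc 0 1))
    (hμ0 : ∀ x ∈ Icc (0:ℝ) 1, μ x ≠ 0) (hsμ : ∫ y in (0:ℝ)..1, s y / μ y = 0)
    (hJ : k * ∫ y in (0:ℝ)..1, c y / μ y ≠ 0) (hD : (k * ∫ y in (0:ℝ)..1, s y * s y / μ y) ≠ 1)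
    {v : ℝ → ℂ} (hv : memXC v) (hTv : ∀ x ∈ Icc (0:ℝ) 1, rankTwoSubMul k c s μ v x = 0) :
    ∀ x ∈ Icc (0:ℝ) 1, v x = 0 := by
  obtain ⟨-, hv_mean⟩ := hv
  unfold rankTwoSubMul at hTv
  set A := ∫ y in (0:ℝ)..1, c y * v y
  set B := ∫ y in (0:ℝ)..1, s y * v y
  have hv_eq : EqOn v (fun y => (k * (A * c y + B * s y) - 0) / μ y) (Icc 0 1) := fun x hx => by
    rw [eq_div_iff (hμ0 x hx)]
    linear_combination -hTv x hx
  have hφv : ∀ {φ : ℝ → ℂ}, ContinuousOn φ (Icc 0 1) → ∫ y in (0:ℝ)..1, φ y * v y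
      = A * (k * ∫ y in (0:ℝ)..1, φ y * c y / μ y) + B * (k * ∫ y in (0:ℝ)..1, φ y * s y / μ y)
        - ∫ y in (0:ℝ)..1, φ y * 0 / μ y := fun hφ => by
    rw [← integral_mul_rankTwo_div hc hs hμ hμ0 continuousOn_const hφ]
    exact integral_congr_Icc zero_le_one fun y hy => by rw [hv_eq hy]
  have hA : A = 0 := by
    have h := hφv (φ := fun _ => 1) continuousOn_const
    simp only [one_mul, hv_mean, hsμ, mul_zero, zero_div, intervalIntegral.integral_zero,
      add_zero, sub_zero] at h
    exact (mul_eq_zero.mp h.symm).resolve_right hJ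
  have hB : B = 0 := by
    have h : B = _ := hφv hs
    simp only [hA, mul_zero, zero_div, intervalIntegral.integral_zero, zero_mul, zero_add,
      sub_zero] at h
    have h' : B * ((k * ∫ y in (0:ℝ)..1, s y * s y / μ y) - 1) = 0 := by linear_combination -h
    exact (mul_eq_zero.mp h').resolve_right (sub_ne_zero.mpr hD)
  intro x hx
  simp [hv_eq hx, hA, hB]

theorem mul_integral_mul_div_eq {C : ℂ} (hμ : ContinuousOn μ (Icc 0 1))
    (hμ0 : ∀ x ∈ Icc (0:ℝ) 1, μ x ≠ 0) (hμ_eq : ∀ x ∈ Icc (0:ℝ) 1, μ x = k * C * c x + z)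
    {f : ℝ → ℂ} (hf : ContinuousOn f (Icc 0 1)) :
    k * C * ∫ y in (0:ℝ)..1, c y * f y / μ y
      = (∫ y in (0:ℝ)..1, f y) - z * ∫ y in (0:ℝ)..1, f y / μ y := by
  rw [← intervalIntegral.integral_const_mul, ← intervalIntegral.integral_const_mul,
    ← intervalIntegral.integral_sub (hf.intervalIntegrable_of_Icc zero_le_one)
      ((ContinuousOn.intervalIntegrable_of_Icc (u := fun y => f y / μ y) zero_le_one
        (hf.div hμ hμ0)).const_mul z)]
  refine integral_congr_Icc zero_le_one fun y hy => ?_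
  have hμy := hμ0 y hy
  rw [hμ_eq y hy] at hμy ⊢
  field_simp
  ring

theorem exists_rankTwoSubMul_eq (hc : ContinuousOn c (Icc 0 1))
    (hs : ContinuousOn s (Icc 0 1)) (hμ : ContinuousOn μ (Icc 0 1))
    (hμ0 : ∀ x ∈ Icc (0:ℝ) 1, μ x ≠ 0)
    (hμ_eq : ∀ x ∈ Icc (0:ℝ) 1, μ x = k * (∫ y in (0:ℝ)..1, c y) * c x + z)
    (hC : ∫ y in (0:ℝ)..1, c y ≠ 0) (hsμ : ∫ y in (0:ℝ)..1, s y / μ y = 0)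
    (hscμ : ∫ y in (0:ℝ)..1, s y * c y / μ y = 0)
    (hJ : k * ∫ y in (0:ℝ)..1, c y / μ y ≠ 0)
    (hD : (k * ∫ y in (0:ℝ)..1, s y * s y / μ y) ≠ 1) {g : ℝ → ℂ} (hg : memXC g) :
    ∃ v, memXC v ∧ ∀ x ∈ Icc (0:ℝ) 1, rankTwoSubMul k c s μ v x = g x := by
  obtain ⟨hg_cont, hg_mean⟩ := hg
  -- `a` is chosen to make `v` mean-zero; the remaining condition `∫ c v = a` degenerates at
  -- `z = 0` and holds automatically because `L` preserves the mean.
  set a := (∫ y in (0:ℝ)..1, g y / μ y) / (k * ∫ y in (0:ℝ)..1, c y / μ y)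
  set b := (∫ y in (0:ℝ)..1, s y * g y / μ y) / ((k * ∫ y in (0:ℝ)..1, s y * s y / μ y) - 1)
  set v := fun y => (k * (a * c y + b * s y) - g y) / μ y
  have hv_cont : ContinuousOn v (Icc 0 1) :=
    ((continuousOn_const.mul ((continuousOn_const.mul hc).add
      (continuousOn_const.mul hs))).sub hg_cont).div hμ hμ0
  have hv_mean : ∫ y in (0:ℝ)..1, v y = 0 := by
    have h := integral_mul_rankTwo_div (k := k) hc hs hμ hμ0 hg_cont (φ := fun _ => 1)
      continuousOn_const a b
    simp only [one_mul, hsμ, mul_zero, add_zero] at h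
    rw [h, div_mul_cancel₀ _ hJ, sub_self]
  have hcv : ∫ y in (0:ℝ)..1, c y * v y = a := by
    have h := integral_mul_rankTwo_div (k := k) hc hs hμ hμ0 hg_cont hc a b
    have hcs : ∫ y in (0:ℝ)..1, c y * s y / μ y = 0 := by simpa only [mul_comm] using hscμ
    have hcc := mul_integral_mul_div_eq hμ hμ0 hμ_eq hc
    have hcg := mul_integral_mul_div_eq hμ hμ0 hμ_eq hg_cont
    have ha : a * (k * ∫ y in (0:ℝ)..1, c y / μ y) = ∫ y in (0:ℝ)..1, g y / μ y :=
      div_mul_cancel₀ _ hJ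
    rw [hg_mean] at hcg
    refine mul_left_cancel₀ (mul_ne_zero (left_ne_zero_of_mul hJ) hC) ?_
    rw [h, hcs]
    linear_combination a * k * hcc - hcg - z * ha
  have hsv : ∫ y in (0:ℝ)..1, s y * v y = b := by
    have h := integral_mul_rankTwo_div (k := k) hc hs hμ hμ0 hg_cont hs a b
    have hb : b * ((k * ∫ y in (0:ℝ)..1, s y * s y / μ y) - 1)
        = ∫ y in (0:ℝ)..1, s y * g y / μ y := div_mul_cancel₀ _ (sub_ne_zero.mpr hD)
    rw [h, hscμ]
    linear_combination hb
  refine ⟨v, ⟨hv_cont, hv_mean⟩, fun x hx => ?_⟩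
  rw [rankTwoSubMul, hcv, hsv]
  simp only [v]
  field_simp [hμ0 x hx]
  ring

end RankTwo

section Kuramoto

variable {K p : ℝ} {u : ℝ → ℝ}

noncomputable def multiplier (K p : ℝ) (u : ℝ → ℝ) (z : ℂ) (x : ℝ) : ℂ :=
  ((K * p * (∫ y in (0:ℝ)..1, cos (u y)) * cos (u x) : ℝ) : ℂ) + z

theorem LER_sub_mul_eq_rankTwoSubMul (hu : ContinuousOn u (Icc 0 1))
    (hsin : ∫ y in (0:ℝ)..1, sin (u y) = 0) {v : ℝ → ℂ} (hv : ContinuousOn v (Icc 0 1))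
    (z : ℂ) (x : ℝ) :
    LER K p u v x - z * v x = rankTwoSubMul (K * p : ℝ) (fun y => cos (u y))
      (fun y => sin (u y)) (multiplier K p u z) v x := by
  have hc : ContinuousOn (fun y => (cos (u y) : ℂ)) (Icc 0 1) := by fun_prop
  have hs : ContinuousOn (fun y => (sin (u y) : ℂ)) (Icc 0 1) := by fun_prop
  have hcI : IntervalIntegrable (fun y => (cos (u y) : ℂ)) volume 0 1 :=
    hc.intervalIntegrable_of_Icc zero_le_one
  have hsI : IntervalIntegrable (fun y => (sin (u y) : ℂ)) volume 0 1 :=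
    hs.intervalIntegrable_of_Icc zero_le_one
  have hcvI : IntervalIntegrable (fun y => (cos (u y) : ℂ) * v y) volume 0 1 :=
    (hc.mul hv).intervalIntegrable_of_Icc zero_le_one
  have hsvI : IntervalIntegrable (fun y => (sin (u y) : ℂ) * v y) volume 0 1 :=
    (hs.mul hv).intervalIntegrable_of_Icc zero_le_one
  have hsplit : ∫ y in (0:ℝ)..1, ((cos (u y - u x) : ℝ) : ℂ) * (v y - v x)
      = cos (u x) * (∫ y in (0:ℝ)..1, cos (u y) * v y)
          + sin (u x) * (∫ y in (0:ℝ)..1, sin (u y) * v y)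
        - (cos (u x) * (∫ y in (0:ℝ)..1, (cos (u y) : ℂ))
          + sin (u x) * ∫ y in (0:ℝ)..1, (sin (u y) : ℂ)) * v x := by
    calc ∫ y in (0:ℝ)..1, ((cos (u y - u x) : ℝ) : ℂ) * (v y - v x)
        = ∫ y in (0:ℝ)..1, ((cos (u x) * (cos (u y) * v y) + sin (u x) * (sin (u y) * v y))
            - (cos (u y) * cos (u x) + sin (u y) * sin (u x)) * v x) :=
          integral_congr fun y _ => by rw [cos_sub]; push_cast; ring
      _ = _ := by
          rw [intervalIntegral.integral_sub ((hcvI.const_mul _).add (hsvI.const_mul _))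
              (((hcI.mul_const _).add (hsI.mul_const _)).mul_const _),
            intervalIntegral.integral_add (hcvI.const_mul _) (hsvI.const_mul _),
            intervalIntegral.integral_mul_const,
            intervalIntegral.integral_add (hcI.mul_const _) (hsI.mul_const _),
            intervalIntegral.integral_const_mul, intervalIntegral.integral_const_mul,
            intervalIntegral.integral_mul_const, intervalIntegral.integral_mul_const]
          ring
  rw [LER, hsplit, intervalIntegral.integral_ofReal, intervalIntegral.integral_ofReal, hsin,
    rankTwoSubMul, multiplier]
  push_cast
  ring

theorem integral_cos_pos (hu : ContinuousOn u (Icc 0 1))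
    (hcos : ∀ x ∈ Icc (0:ℝ) 1, 0 < cos (u x)) : 0 < ∫ y in (0:ℝ)..1, cos (u y) :=
  intervalIntegral_pos_of_pos_on
    ((continuous_cos.comp_continuousOn hu).intervalIntegrable_of_Icc zero_le_one)
    (fun x hx => hcos x (Ioo_subset_Icc_self hx)) one_pos

theorem isInResolventER_of_integral_ne (hu : ContinuousOn u (Icc 0 1))
    (hodd : ∀ x ∈ Icc (0:ℝ) 1, u (1 - x) = -u x) (hC : ∫ y in (0:ℝ)..1, cos (u y) ≠ 0)
    {z : ℂ} (hμ0 : ∀ x ∈ Icc (0:ℝ) 1, multiplier K p u z x ≠ 0)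
    (hJ : ((K * p : ℝ) : ℂ) * ∫ y in (0:ℝ)..1, (cos (u y) : ℂ) / multiplier K p u z y ≠ 0)
    (hD : (((K * p : ℝ) : ℂ) * ∫ y in (0:ℝ)..1,
      (sin (u y) : ℂ) * sin (u y) / multiplier K p u z y) ≠ 1) :
    IsInResolventER K p u z := by
  have hc : ContinuousOn (fun y => (cos (u y) : ℂ)) (Icc 0 1) := by fun_prop
  have hs : ContinuousOn (fun y => (sin (u y) : ℂ)) (Icc 0 1) := by fun_prop
  have hμ : ContinuousOn (multiplier K p u z) (Icc 0 1) := by unfold multiplier; fun_prop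
  have hsymm : ∀ x ∈ Icc (0:ℝ) 1, multiplier K p u z (0 + 1 - x) = multiplier K p u z x ∧
      sin (u (0 + 1 - x)) = -sin (u x) ∧ cos (u (0 + 1 - x)) = cos (u x) := fun x hx => by
    simp only [zero_add, multiplier, hodd x hx, cos_neg, sin_neg, and_self]
  have hsin : ∫ y in (0:ℝ)..1, sin (u y) = 0 :=
    integral_eq_zero_of_odd_about_midpoint zero_le_one fun x hx => (hsymm x hx).2.1
  have hsμ : ∫ y in (0:ℝ)..1, (sin (u y) : ℂ) / multiplier K p u z y = 0 :=
    integral_eq_zero_of_odd_about_midpoint zero_le_one fun x hx => by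
      rw [(hsymm x hx).1, (hsymm x hx).2.1]; push_cast; ring
  have hscμ : ∫ y in (0:ℝ)..1, (sin (u y) : ℂ) * cos (u y) / multiplier K p u z y = 0 :=
    integral_eq_zero_of_odd_about_midpoint zero_le_one fun x hx => by
      rw [(hsymm x hx).1, (hsymm x hx).2.1, (hsymm x hx).2.2]; push_cast; ring
  have hμ_eq : ∀ x ∈ Icc (0:ℝ) 1, multiplier K p u z x
      = ((K * p : ℝ) : ℂ) * (∫ y in (0:ℝ)..1, (cos (u y) : ℂ)) * cos (u x) + z := fun x _ => by
    rw [multiplier, intervalIntegral.integral_ofReal]; push_cast; ring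
  have hLER {v : ℝ → ℂ} (hv : memXC v) (x : ℝ) :=
    LER_sub_mul_eq_rankTwoSubMul (K := K) (p := p) hu hsin hv.1 z x
  constructor
  · intro v hv hLv
    exact eq_zero_of_rankTwoSubMul_eq_zero hc hs hμ hμ0 hsμ hJ hD hv fun x hx =>
      (hLER hv x).symm.trans (hLv x hx)
  · intro g hg
    have hC' : ∫ y in (0:ℝ)..1, (cos (u y) : ℂ) ≠ 0 := by
      rw [intervalIntegral.integral_ofReal]; exact_mod_cast hC
    obtain ⟨v, hv, hTv⟩ := exists_rankTwoSubMul_eq hc hs hμ hμ0 hμ_eq hC' hsμ hscμ hJ hD hg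
    exact ⟨v, hv, fun x hx => (hLER hv x).trans (hTv x hx)⟩

theorem isInResolventER_of_im_ne_zero (hKp : 0 < K * p) (hu : ContinuousOn u (Icc 0 1))
    (hodd : ∀ x ∈ Icc (0:ℝ) 1, u (1 - x) = -u x) (hcos : ∀ x ∈ Icc (0:ℝ) 1, 0 < cos (u x))
    {z : ℂ} (hz : z.im ≠ 0) : IsInResolventER K p u z := by
  have hμ : ContinuousOn (multiplier K p u z) (Icc 0 1) := by unfold multiplier; fun_prop
  have hμt : ∀ x ∈ Icc (0:ℝ) 1, (multiplier K p u z x).im = z.im := fun x _ => by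
    simp [multiplier]
  have hμ0 : ∀ x ∈ Icc (0:ℝ) 1, multiplier K p u z x ≠ 0 := fun x hx h =>
    hz (by rw [← hμt x hx, h, Complex.zero_im])
  have hKp' : ((K * p : ℝ) : ℂ) ≠ 0 := by exact_mod_cast hKp.ne'
  refine isInResolventER_of_integral_ne hu hodd (integral_cos_pos hu hcos).ne' hμ0
    (mul_ne_zero hKp' (integral_ofReal_div_ne_zero one_pos (by fun_prop) hcos hμ hμ0 hz hμt))
    fun hD => ?_
  have hsq : ∫ y in (0:ℝ)..1, (sin (u y) : ℂ) * sin (u y) / multiplier K p u z y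
      = ∫ y in (0:ℝ)..1, ((sin (u y) ^ 2 : ℝ) : ℂ) / multiplier K p u z y :=
    integral_congr fun y _ => by push_cast; ring
  rw [hsq] at hD
  have him : (∫ y in (0:ℝ)..1, ((sin (u y) ^ 2 : ℝ) : ℂ) / multiplier K p u z y).im = 0 := by
    have h := congrArg Complex.im hD
    rw [Complex.im_ofReal_mul, Complex.one_im] at h
    exact (mul_eq_zero.mp h).resolve_left hKp.ne'
  rw [integral_ofReal_div_eq_zero_of_im_eq_zero zero_le_one (by fun_prop)
    (fun _ _ => sq_nonneg _) hμ hμ0 hz hμt him, mul_zero] at hD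
  exact zero_ne_one hD

theorem mul_integral_sq_div_le {k C ρ : ℝ} {c s : ℝ → ℝ} (hk : 0 < k) (hC : 0 < C)
    (hρ : 0 ≤ ρ) (hc : ContinuousOn c (Icc 0 1)) (hs : ContinuousOn s (Icc 0 1))
    (hc0 : ∀ x ∈ Icc (0:ℝ) 1, 0 < c x) :
    k * ∫ y in (0:ℝ)..1, s y ^ 2 / (k * C * c y + ρ)
      ≤ (∫ y in (0:ℝ)..1, s y ^ 2 / c y) / C := by
  rw [← intervalIntegral.integral_const_mul, ← intervalIntegral.integral_div]
  refine intervalIntegral.integral_mono_on zero_le_one ?_ ?_ fun y hy => ?_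
  · exact (continuousOn_const.mul ((hs.pow 2).div (by fun_prop) fun x hx =>
      (by have := hc0 x hx; positivity))).intervalIntegrable_of_Icc zero_le_one
  · exact (((hs.pow 2).div hc fun x hx => (hc0 x hx).ne').div_const C).intervalIntegrable_of_Icc
      zero_le_one
  · have hcy := hc0 y hy
    calc k * (s y ^ 2 / (k * C * c y + ρ)) = k * s y ^ 2 / (k * C * c y + ρ) := by ring
      _ ≤ k * s y ^ 2 / (k * C * c y) := by gcongr; linarith
      _ = s y ^ 2 / c y / C := by field_simp

theorem isInResolventER_of_re_nonneg (hKp : 0 < K * p) (hu : ContinuousOn u (Icc 0 1))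
    (hodd : ∀ x ∈ Icc (0:ℝ) 1, u (1 - x) = -u x) (hcos : ∀ x ∈ Icc (0:ℝ) 1, 0 < cos (u x))
    (hcrit : ∫ y in (0:ℝ)..1, sin (u y) ^ 2 / cos (u y) < ∫ y in (0:ℝ)..1, cos (u y))
    {z : ℂ} (hz : 0 ≤ z.re) : IsInResolventER K p u z := by
  rcases ne_or_eq z.im 0 with hzi | hzi
  · exact isInResolventER_of_im_ne_zero hKp hu hodd hcos hzi
  obtain ⟨ρ, rfl⟩ : ∃ ρ : ℝ, (ρ : ℂ) = z := ⟨z.re, Complex.ext rfl hzi.symm⟩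
  have hρ : 0 ≤ ρ := by simpa using hz
  have hC := integral_cos_pos hu hcos
  set C := ∫ y in (0:ℝ)..1, cos (u y)
  set m : ℝ → ℝ := fun x => K * p * C * cos (u x) + ρ
  have hm : ∀ x ∈ Icc (0:ℝ) 1, 0 < m x := fun x hx => by
    have := hcos x hx; simp only [m]; positivity
  have hμ : ∀ x, multiplier K p u ρ x = (m x : ℂ) := fun x => by
    simp only [multiplier, m]; push_cast; ring
  have hreal : ∀ w : ℝ → ℝ, ∫ y in (0:ℝ)..1, (w y : ℂ) / multiplier K p u ρ y
      = ((∫ y in (0:ℝ)..1, w y / m y : ℝ) : ℂ) := fun w => by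
    simp only [hμ, ← Complex.ofReal_div, intervalIntegral.integral_ofReal]
  refine isInResolventER_of_integral_ne hu hodd hC.ne'
    (fun x hx => by rw [hμ]; exact_mod_cast (hm x hx).ne') ?_ ?_
  · rw [hreal]
    have hm_cont : ContinuousOn m (Icc 0 1) := by fun_prop
    have hJ : 0 < ∫ y in (0:ℝ)..1, cos (u y) / m y :=
      intervalIntegral_pos_of_pos_on
        (((continuous_cos.comp_continuousOn hu).div hm_cont fun x hx =>
          (hm x hx).ne').intervalIntegrable_of_Icc zero_le_one)
        (fun x hx => div_pos (hcos x (Ioo_subset_Icc_self hx)) (hm x (Ioo_subset_Icc_self hx)))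
        one_pos
    exact_mod_cast mul_ne_zero hKp.ne' hJ.ne'
  · have hD : K * p * ∫ y in (0:ℝ)..1, sin (u y) ^ 2 / m y < 1 :=
      (mul_integral_sq_div_le hKp hC hρ (continuous_cos.comp_continuousOn hu)
        (continuous_sin.comp_continuousOn hu) hcos).trans_lt ((div_lt_one hC).mpr hcrit)
    have hsq : ∫ y in (0:ℝ)..1, (sin (u y) : ℂ) * sin (u y) / multiplier K p u ρ y
        = ∫ y in (0:ℝ)..1, ((sin (u y) ^ 2 : ℝ) : ℂ) / multiplier K p u ρ y :=
      integral_congr fun y _ => by push_cast; ring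
    rw [hsq, hreal]
    exact_mod_cast hD.ne

end Kuramoto

theorem cos_arcsin_pos {x : ℝ} (hx : |x| < 1) : 0 < cos (arcsin x) := by
  rw [cos_arcsin, sqrt_pos, sub_pos, sq_lt_one_iff_abs_lt_one]
  exact hx

theorem sin_sq_div_cos_arcsin_div {ω κ : ℝ} (hκ : 0 < κ) (hω : |ω| < κ) :
    sin (arcsin (ω / κ)) ^ 2 / cos (arcsin (ω / κ)) = ω ^ 2 / (κ * √(κ ^ 2 - ω ^ 2)) := by
  have hωκ : |ω / κ| < 1 := by rwa [abs_div, abs_of_pos hκ, div_lt_one hκ]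
  have hsq : 1 - (ω / κ) ^ 2 = (κ ^ 2 - ω ^ 2) / κ ^ 2 := by field_simp
  rw [sin_arcsin (neg_le_of_abs_le hωκ.le) (le_of_abs_le hωκ.le), cos_arcsin, hsq,
    sqrt_div' _ (sq_nonneg κ), sqrt_sq hκ.le]
  field_simp

/-- In the Erdős–Rényi Kuramoto setting (`Ω : [0,1] → [−1,1]` continuous and
odd about `x = 1/2`, `K > 0`, `p ∈ (0,1]`, `u*(x) = arcsin(Ω(x)/κ)`, `C = ∫₀¹ cos(u*(y)) dy`),
if `κ > 1` then the spectrum of `L` on `X_ℂ` is real (every non-real `z` lies in the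
resolvent set), and if moreover `(1/(κC)) ∫₀¹ Ω(y)²/√(κ² − Ω(y)²) dy < 1`, then the spectrum
is contained in `{Re z < 0}` (every `z` with `Re z ≥ 0` lies in the resolvent set), i.e. the
synchronous solution `u*` is spectrally stable. -/
theorem stmt_6 (K p : ℝ) (hK : 0 < K) (hp : p ∈ Set.Ioc (0:ℝ) 1)
    (Ω : ℝ → ℝ)
    (hΩ_cont : ContinuousOn Ω (Set.Icc (0:ℝ) 1))
    (hΩ_range : ∀ x ∈ Set.Icc (0:ℝ) 1, Ω x ∈ Set.Icc (-1:ℝ) 1)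
    (hΩ_odd : ∀ x ∈ Set.Icc (0:ℝ) 1, Ω (1 - x) = -Ω x)
    (κ : ℝ) (hκ : 1 < κ)
    (ustar : ℝ → ℝ) (hustar : ∀ x, ustar x = Real.arcsin (Ω x / κ))
    (C : ℝ) (hC : C = ∫ y in (0:ℝ)..1, Real.cos (ustar y)) :
    (∀ z : ℂ, z.im ≠ 0 → IsInResolventER K p ustar z)
    ∧ ((1 / (κ * C)) * (∫ y in (0:ℝ)..1, (Ω y)^2 / Real.sqrt (κ^2 - (Ω y)^2)) < 1 →
        ∀ z : ℂ, 0 ≤ z.re → IsInResolventER K p ustar z) := by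
  have hKp : 0 < K * p := mul_pos hK hp.1
  have hκ0 : 0 < κ := zero_lt_one.trans hκ
  have hΩκ : ∀ x ∈ Icc (0:ℝ) 1, |Ω x| < κ := fun x hx => (abs_le.mpr (hΩ_range x hx)).trans_lt hκ
  have hu : ContinuousOn ustar (Icc 0 1) :=
    (continuous_arcsin.comp_continuousOn (hΩ_cont.div_const κ)).congr fun x _ => hustar x
  have hodd : ∀ x ∈ Icc (0:ℝ) 1, ustar (1 - x) = -ustar x := fun x hx => by
    rw [hustar, hustar, hΩ_odd x hx, neg_div, arcsin_neg]
  have hcos : ∀ x ∈ Icc (0:ℝ) 1, 0 < cos (ustar x) := fun x hx => by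
    rw [hustar]
    exact cos_arcsin_pos (by rw [abs_div, abs_of_pos hκ0, div_lt_one hκ0]; exact hΩκ x hx)
  refine ⟨fun z => isInResolventER_of_im_ne_zero hKp hu hodd hcos,
    fun hstab z => isInResolventER_of_re_nonneg hKp hu hodd hcos ?_⟩
  have hC0 : 0 < C := hC ▸ integral_cos_pos hu hcos
  calc ∫ y in (0:ℝ)..1, sin (ustar y) ^ 2 / cos (ustar y)
      = C * ((1 / (κ * C)) * ∫ y in (0:ℝ)..1, Ω y ^ 2 / √(κ ^ 2 - Ω y ^ 2)) := by
        rw [← intervalIntegral.integral_const_mul, ← intervalIntegral.integral_const_mul]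
        refine integral_congr_Icc zero_le_one fun y hy => ?_
        rw [hustar, sin_sq_div_cos_arcsin_div hκ0 (hΩκ y hy)]
        field_simp
    _ < C * 1 := mul_lt_mul_of_pos_left hstab hC0
    _ = ∫ y in (0:ℝ)..1, cos (ustar y) := by rw [mul_one, hC]
end

section
/- Let n ≥ 1, K ≠ 0 and ω ∈ ℝ, let Ω_n : [0,1) → ℝ be a step function on {I_j^n} and W_n a step graphon on {I_j^n × I_k^n}. Let u : [0,1) → ℝ be bounded, continuous on each interval I_j^n, and satisfy Ω_n(x) − ω + K ∫₀¹ W_n(x,y) sin(u(y) − u(x)) dy = 0 for every x ∈ [0,1). If ∫₀¹ W_n(x,y) cos(u(y) − u(x)) dy ≠ 0 for every x ∈ [0,1), then u is constant on each interval I_j^n. -/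
open MeasureTheory intervalIntegral

/-- `f` is a step function on the intervals `I_j^n = [(j−1)/n, j/n)`, `j = 1, …, n`
(zero-based: constant on `[j/n, (j+1)/n)` for `j = 0, …, n−1`). -/
def IsStepFn (n : ℕ) (f : ℝ → ℝ) : Prop :=
  ∀ j < n, ∀ x ∈ Set.Ico ((j : ℝ) / n) ((j + 1 : ℝ) / n), f x = f ((j : ℝ) / n)

/-- `V` is a step graphon on the rectangles `I_j^n × I_k^n`. -/
def IsStepGraphon (n : ℕ) (V : ℝ → ℝ → ℝ) : Prop :=
  ∀ j < n, ∀ k < n, ∀ x ∈ Set.Ico ((j : ℝ) / n) ((j + 1 : ℝ) / n),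
    ∀ y ∈ Set.Ico ((k : ℝ) / n) ((k + 1 : ℝ) / n),
      V x y = V ((j : ℝ) / n) ((k : ℝ) / n)

/-!
For `z ∈ I_j` the row `W_n(z, ·)` agrees with `W_n(j/n, ·)` on `[0,1)`, so with
`S = ∫ W_n(j/n, y) sin u(y) dy` and `C = ∫ W_n(j/n, y) cos u(y) dy` the sine and cosine integrals
at `z` are `g (u z)` and `-g' (u z)` for `g t = S cos t - C sin t`. The steady-state equation makes
`g ∘ u` constant on `I_j`, while the cosine hypothesis says that `g'` has no zero on `u(I_j)`, an
interval since `u` is continuous there; by Rolle's theorem `u` is constant on `I_j`.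
-/

open Set Real

def stepIco (n j : ℕ) : Set ℝ := Ico ((j : ℝ) / n) ((j + 1 : ℝ) / n)

section StepIco

variable {n j : ℕ}

theorem left_mem_stepIco (hj : j < n) : (j : ℝ) / n ∈ stepIco n j := by
  have hn : (0 : ℝ) < n := by exact_mod_cast j.zero_le.trans_lt hj
  exact ⟨le_rfl, div_lt_div_of_pos_right (lt_add_one _) hn⟩

theorem stepIco_subset_Ico_zero_one (hj : j < n) : stepIco n j ⊆ Ico 0 1 := by
  have hn : (0 : ℝ) < n := by exact_mod_cast j.zero_le.trans_lt hj
  have hjn : (j + 1 : ℝ) ≤ n := by exact_mod_cast hj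
  rintro y ⟨hy₀, hy₁⟩
  exact ⟨(by positivity : (0 : ℝ) ≤ j / n).trans hy₀,
    hy₁.trans_le ((div_le_one hn).2 hjn)⟩

theorem exists_mem_stepIco {y : ℝ} (hy : y ∈ Ico (0 : ℝ) 1) (hn : 0 < n) :
    ∃ k < n, y ∈ stepIco n k := by
  have hn' : (0 : ℝ) < n := by exact_mod_cast hn
  have hyn : 0 ≤ y * n := mul_nonneg hy.1 hn'.le
  refine ⟨⌊y * n⌋₊, (Nat.floor_lt hyn).2 (by nlinarith [hy.2]), ?_, ?_⟩
  · rw [div_le_iff₀ hn']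
    exact Nat.floor_le hyn
  · rw [lt_div_iff₀ hn']
    exact_mod_cast Nat.lt_floor_add_one (y * n)

theorem Ico_zero_one_eq_biUnion_stepIco (hn : 0 < n) :
    Ico (0 : ℝ) 1 = ⋃ k ∈ Finset.range n, stepIco n k := by
  ext y
  simp only [mem_iUnion, Finset.mem_range, exists_prop]
  exact ⟨fun hy => exists_mem_stepIco hy hn,
    fun ⟨k, hk, hy⟩ => stepIco_subset_Ico_zero_one hk hy⟩

theorem IsStepGraphon.apply_eq_of_mem_stepIco {W : ℝ → ℝ → ℝ} (hW : IsStepGraphon n W)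
    (hj : j < n) {z y : ℝ} (hz : z ∈ stepIco n j) (hy : y ∈ Ico (0 : ℝ) 1) :
    W z y = W (j / n) y := by
  obtain ⟨k, hk, hyk⟩ := exists_mem_stepIco hy (j.zero_le.trans_lt hj)
  rw [hW j hj k hk z hz y hyk, hW j hj k hk _ (left_mem_stepIco hj) y hyk]

theorem intervalIntegrable_zero_one_of_continuousOn_stepIco {f : ℝ → ℝ} (hn : 0 < n)
    (hf : ∀ k < n, ContinuousOn f (stepIco n k))
    (hbdd : ∀ k < n, ∃ M, ∀ y ∈ stepIco n k, |f y| ≤ M) :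
    IntervalIntegrable f volume 0 1 := by
  rw [intervalIntegrable_iff_integrableOn_Ico_of_le zero_le_one,
    Ico_zero_one_eq_biUnion_stepIco hn, integrableOn_finset_iUnion]
  intro k hk
  obtain ⟨M, hM⟩ := hbdd k (Finset.mem_range.1 hk)
  exact .of_bound measure_Ico_lt_top
    ((hf k (Finset.mem_range.1 hk)).aestronglyMeasurable measurableSet_Ico) M
    ((ae_restrict_iff' measurableSet_Ico).2 (ae_of_all _ hM))

theorem IsStepGraphon.intervalIntegrable_mul_comp {W : ℝ → ℝ → ℝ} (hW : IsStepGraphon n W)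
    (hj : j < n) {u v : ℝ → ℝ} (hu : ∀ k < n, ContinuousOn u (stepIco n k))
    (hv : Continuous v) {M : ℝ} (hvM : ∀ t, |v t| ≤ M) :
    IntervalIntegrable (fun y => W (j / n) y * v (u y)) volume 0 1 := by
  have hn : 0 < n := j.zero_le.trans_lt hj
  have hrow : ∀ k < n, ∀ y ∈ stepIco n k, W (j / n) y = W (j / n) (k / n) :=
    fun k hk => hW j hj k hk _ (left_mem_stepIco hj)
  refine intervalIntegrable_zero_one_of_continuousOn_stepIco hn (fun k hk => ?_) (fun k hk => ?_)
  · refine ((continuousOn_const (c := W (j / n) (k / n))).mul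
      (hv.comp_continuousOn (hu k hk))).congr fun y hy => ?_
    rw [hrow k hk y hy]
    rfl
  · refine ⟨|W (j / n) (k / n)| * M, fun y hy => ?_⟩
    rw [hrow k hk y hy, abs_mul]
    exact mul_le_mul_of_nonneg_left (hvM _) (abs_nonneg _)

end StepIco

section Trig

variable {a b : ℝ} {R v : ℝ → ℝ}

theorem integral_mul_sin_sub (hs : IntervalIntegrable (fun y => R y * sin (v y)) volume a b)
    (hc : IntervalIntegrable (fun y => R y * cos (v y)) volume a b) (c : ℝ) :
    ∫ y in a..b, R y * sin (v y - c) =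
      (∫ y in a..b, R y * sin (v y)) * cos c - (∫ y in a..b, R y * cos (v y)) * sin c := by
  simp_rw [sin_sub, mul_sub, ← mul_assoc]
  rw [integral_sub (hs.mul_const _) (hc.mul_const _), intervalIntegral.integral_mul_const,
    intervalIntegral.integral_mul_const]

theorem integral_mul_cos_sub (hs : IntervalIntegrable (fun y => R y * sin (v y)) volume a b)
    (hc : IntervalIntegrable (fun y => R y * cos (v y)) volume a b) (c : ℝ) :
    ∫ y in a..b, R y * cos (v y - c) =
      (∫ y in a..b, R y * cos (v y)) * cos c + (∫ y in a..b, R y * sin (v y)) * sin c := by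
  simp_rw [cos_sub, mul_add, ← mul_assoc]
  rw [integral_add (hc.mul_const _) (hs.mul_const _), intervalIntegral.integral_mul_const,
    intervalIntegral.integral_mul_const]

theorem hasDerivAt_mul_cos_sub_mul_sin (S C t : ℝ) :
    HasDerivAt (fun t => S * cos t - C * sin t) (-(C * cos t + S * sin t)) t :=
  (((hasDerivAt_cos t).const_mul S).sub ((hasDerivAt_sin t).const_mul C)).congr_deriv (by ring)

end Trig

theorem IsPreconnected.apply_eq_of_comp_eq_of_deriv_ne_zero {s : Set ℝ} (hs : IsPreconnected s)
    {u g : ℝ → ℝ} (hu : ContinuousOn u s) (hg : Continuous g) {c : ℝ}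
    (hgu : ∀ z ∈ s, g (u z) = c) (hg' : ∀ z ∈ s, deriv g (u z) ≠ 0) {x y : ℝ}
    (hx : x ∈ s) (hy : y ∈ s) : u x = u y := by
  wlog hxy : u x ≤ u y generalizing x y
  · exact (this hy hx (le_of_not_ge hxy)).symm
  by_contra hne
  obtain ⟨t, ht, hderiv⟩ := exists_deriv_eq_zero (lt_of_le_of_ne hxy hne) hg.continuousOn
    ((hgu x hx).trans (hgu y hy).symm)
  obtain ⟨z, hz, rfl⟩ := (hs.image u hu).Icc_subset (mem_image_of_mem u hx)
    (mem_image_of_mem u hy) (Ioo_subset_Icc_self ht)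
  exact hg' z hz hderiv

theorem stmt_11_general (n : ℕ) (K : ℝ) (hK : K ≠ 0) (ω : ℝ)
    (Ωn : ℝ → ℝ) (hΩn_step : IsStepFn n Ωn)
    (Wn : ℝ → ℝ → ℝ)
    (hWn_step : IsStepGraphon n Wn)
    (u : ℝ → ℝ)
    (hu_cont : ∀ j < n, ContinuousOn u (Set.Ico ((j : ℝ) / n) ((j + 1 : ℝ) / n)))
    (heq : ∀ x ∈ Set.Ico (0:ℝ) 1,
      Ωn x - ω + K * ∫ y in (0:ℝ)..1, Wn x y * Real.sin (u y - u x) = 0)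
    (hcos : ∀ x ∈ Set.Ico (0:ℝ) 1,
      (∫ y in (0:ℝ)..1, Wn x y * Real.cos (u y - u x)) ≠ 0) :
    ∀ j < n, ∀ x ∈ Set.Ico ((j : ℝ) / n) ((j + 1 : ℝ) / n), u x = u ((j : ℝ) / n) := by
  intro j hj x hx
  have hsub := stepIco_subset_Ico_zero_one hj
  have hrow : ∀ z ∈ stepIco n j, ∀ y ∈ Ioo (0 : ℝ) 1, Wn z y = Wn (j / n) y :=
    fun z hz y hy => hWn_step.apply_eq_of_mem_stepIco hj hz (Ioo_subset_Ico_self hy)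
  have hs := hWn_step.intervalIntegrable_mul_comp hj hu_cont continuous_sin abs_sin_le_one
  have hc := hWn_step.intervalIntegrable_mul_comp hj hu_cont continuous_cos abs_cos_le_one
  set S := ∫ y in (0 : ℝ)..1, Wn (j / n) y * sin (u y)
  set C := ∫ y in (0 : ℝ)..1, Wn (j / n) y * cos (u y)
  have hsin_row : ∀ z ∈ stepIco n j,
      ∫ y in (0 : ℝ)..1, Wn z y * sin (u y - u z) = S * cos (u z) - C * sin (u z) :=
    fun z hz => (integral_congr_Ioo_of_le zero_le_one fun y hy => by rw [hrow z hz y hy]).trans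
      (integral_mul_sin_sub hs hc _)
  have hcos_row : ∀ z ∈ stepIco n j,
      ∫ y in (0 : ℝ)..1, Wn z y * cos (u y - u z) = C * cos (u z) + S * sin (u z) :=
    fun z hz => (integral_congr_Ioo_of_le zero_le_one fun y hy => by rw [hrow z hz y hy]).trans
      (integral_mul_cos_sub hs hc _)
  refine isPreconnected_Ico.apply_eq_of_comp_eq_of_deriv_ne_zero (hu_cont j hj)
    (g := fun t => S * cos t - C * sin t) (c := (ω - Ωn (j / n)) / K) (by fun_prop)
    (fun z hz => ?_) (fun z hz => ?_) hx (left_mem_stepIco hj)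
  · rw [eq_div_iff hK, ← hsin_row z hz, ← hΩn_step j hj z hz]
    linarith [heq z (hsub hz)]
  · rw [(hasDerivAt_mul_cos_sub_mul_sin S C _).deriv, neg_ne_zero, ← hcos_row z hz]
    exact hcos z (hsub hz)

/-- Let `n ≥ 1`, `K ≠ 0`, `ω ∈ ℝ`, let `Ω_n` be a step function on
`{I_j^n}` and `W_n` a step graphon (symmetric, measurable, `[0,1]`-valued) on
`{I_j^n × I_k^n}`. Let `u : [0,1) → ℝ` be bounded, continuous on each `I_j^n`, and satisfy
`Ω_n(x) − ω + K ∫₀¹ W_n(x,y) sin(u(y) − u(x)) dy = 0` for every `x ∈ [0,1)`. If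
`∫₀¹ W_n(x,y) cos(u(y) − u(x)) dy ≠ 0` for every `x ∈ [0,1)`, then `u` is constant on each
interval `I_j^n`. -/
theorem stmt_11 (n : ℕ) (hn : 1 ≤ n) (K : ℝ) (hK : K ≠ 0) (ω : ℝ)
    (Ωn : ℝ → ℝ) (hΩn_step : IsStepFn n Ωn)
    (Wn : ℝ → ℝ → ℝ)
    (hWn_meas : Measurable (Function.uncurry Wn))
    (hWn_symm : ∀ x y, Wn x y = Wn y x)
    (hWn_range : ∀ x y, Wn x y ∈ Set.Icc (0:ℝ) 1)
    (hWn_step : IsStepGraphon n Wn)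
    (u : ℝ → ℝ)
    (hu_bdd : ∃ B : ℝ, ∀ x ∈ Set.Ico (0:ℝ) 1, |u x| ≤ B)
    (hu_cont : ∀ j < n, ContinuousOn u (Set.Ico ((j : ℝ) / n) ((j + 1 : ℝ) / n)))
    (heq : ∀ x ∈ Set.Ico (0:ℝ) 1,
      Ωn x - ω + K * ∫ y in (0:ℝ)..1, Wn x y * Real.sin (u y - u x) = 0)
    (hcos : ∀ x ∈ Set.Ico (0:ℝ) 1,
      (∫ y in (0:ℝ)..1, Wn x y * Real.cos (u y - u x)) ≠ 0) :
    ∀ j < n, ∀ x ∈ Set.Ico ((j : ℝ) / n) ((j + 1 : ℝ) / n), u x = u ((j : ℝ) / n) :=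
  stmt_11_general n K hK ω Ωn hΩn_step Wn hWn_step u hu_cont heq hcos
end

section
/- Let 𝒳 be a complex Banach space and A : 𝒳 → 𝒳 a bounded linear operator. Suppose there are ξ > 0, α > 0 and r ∈ (0, ξ − α) such that the spectrum of A is contained in {z ∈ ℂ : |z + ξ| ≤ r}. Then there exists C ≥ 1 such that ‖exp(tA)‖ ≤ C e^{−αt} for all t ≥ 0, where exp denotes the exponential in the Banach algebra of bounded operators on 𝒳. -/
/-!
Shift the spectrum to the origin: `B = A + ξ` has spectrum in the closed disc of radius
`r < ξ - α`, so by Gelfand's formula `‖Bⁿ‖ ≤ M (ξ - α)ⁿ` for some `M ≥ 1`. Summing the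
exponential series gives `‖exp (tB)‖ ≤ M e^{t(ξ - α)}`, and `exp (tA) = e^{-tξ} exp (tB)`
since the scalar part commutes with everything.
-/

open Complex Filter NormedSpace

open scoped Nat

section BanachAlgebra

variable {A : Type*} [NormedRing A] [NormedAlgebra ℂ A]

theorem norm_exp_le_mul_exp_of_norm_pow_le {x : A} {M c : ℝ}
    (h : ∀ n : ℕ, ‖x ^ n‖ ≤ M * c ^ n) : ‖exp x‖ ≤ M * Real.exp c := by
  have hsum : HasSum (fun n : ℕ => M * (c ^ n / n !)) (M * Real.exp c) := by
    rw [Real.exp_eq_exp_ℝ]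
    exact (expSeries_div_hasSum_exp c).mul_left M
  rw [exp_eq_tsum ℂ]
  refine tsum_of_norm_bounded hsum fun n => ?_
  calc ‖((n ! : ℂ))⁻¹ • x ^ n‖ = (n ! : ℝ)⁻¹ * ‖x ^ n‖ := by simp [norm_smul]
    _ ≤ (n ! : ℝ)⁻¹ * (M * c ^ n) := by gcongr; exact h n
    _ = M * (c ^ n / n !) := by ring

theorem spectralRadius_le_of_forall_norm_le (a : A) {r : ℝ}
    (h : ∀ z ∈ spectrum ℂ a, ‖z‖ ≤ r) : spectralRadius ℂ a ≤ ENNReal.ofReal r :=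
  iSup₂_le fun z hz => (ofReal_norm z).ge.trans (ENNReal.ofReal_le_ofReal (h z hz))

variable [CompleteSpace A]

theorem exists_norm_pow_le_mul_pow_of_spectralRadius_lt (a : A) {s : ℝ}
    (h : spectralRadius ℂ a < ENNReal.ofReal s) :
    ∃ M : ℝ, 1 ≤ M ∧ ∀ n : ℕ, ‖a ^ n‖ ≤ M * s ^ n := by
  have hs : 0 < s := ENNReal.ofReal_pos.mp (pos_of_gt h)
  have hratio : ∀ᶠ n : ℕ in atTop, ‖a ^ n‖ / s ^ n ≤ 1 := by
    filter_upwards [eventually_ne_atTop 0,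
      (spectrum.pow_norm_pow_one_div_tendsto_nhds_spectralRadius a).eventually_lt_const h]
      with n hn0 hn
    rw [ENNReal.ofReal_lt_ofReal_iff hs, one_div] at hn
    rw [div_le_one (pow_pos hs n), ← Real.rpow_inv_natCast_pow (norm_nonneg (a ^ n)) hn0]
    exact pow_le_pow_left₀ (by positivity) hn.le n
  obtain ⟨K, hK⟩ := (isBoundedUnder_of_eventually_le hratio).bddAbove_range
  refine ⟨max 1 K, le_max_left _ _, fun n => ?_⟩
  rw [← div_le_iff₀ (pow_pos hs n)]
  exact (hK ⟨n, rfl⟩).trans (le_max_right 1 K)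

theorem exists_norm_exp_smul_le_of_spectralRadius_lt (a : A) {s : ℝ}
    (h : spectralRadius ℂ a < ENNReal.ofReal s) :
    ∃ M : ℝ, 1 ≤ M ∧ ∀ t : ℝ, 0 ≤ t → ‖exp ((t : ℂ) • a)‖ ≤ M * Real.exp (t * s) := by
  obtain ⟨M, hM1, hM⟩ := exists_norm_pow_le_mul_pow_of_spectralRadius_lt a h
  refine ⟨M, hM1, fun t ht => norm_exp_le_mul_exp_of_norm_pow_le fun n => ?_⟩
  calc ‖((t : ℂ) • a) ^ n‖ ≤ ‖(t : ℂ) ^ n‖ * ‖a ^ n‖ := by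
        rw [smul_pow]; exact norm_smul_le _ _
    _ = t ^ n * ‖a ^ n‖ := by rw [norm_pow, norm_real, Real.norm_of_nonneg ht]
    _ ≤ t ^ n * (M * s ^ n) := by gcongr; exact hM n
    _ = M * (t * s) ^ n := by ring

theorem exp_add_algebraMap (a : A) (z : ℂ) :
    exp (a + algebraMap ℂ A z) = Complex.exp z • exp a := by
  have hball : ∀ x : A, x ∈ Metric.eball (0 : A) (expSeries ℂ A).radius := fun x =>
    (expSeries_radius_eq_top ℂ A).symm ▸ edist_lt_top _ _
  rw [exp_add_of_commute_of_mem_ball (𝕂 := ℂ) (Algebra.commutes z a).symm (hball _) (hball _),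
    ← algebraMap_exp_comm, Complex.exp_eq_exp_ℂ, ← Algebra.commutes, Algebra.smul_def]

end BanachAlgebra

theorem stmt_12_general {𝒳 : Type*} [NormedAddCommGroup 𝒳] [NormedSpace ℂ 𝒳] [CompleteSpace 𝒳]
    (A : 𝒳 →L[ℂ] 𝒳) (ξ α r : ℝ) (hr : r ∈ Set.Ioo 0 (ξ - α))
    (hspec : spectrum ℂ A ⊆ {z : ℂ | ‖z + (ξ : ℂ)‖ ≤ r}) :
    ∃ C : ℝ, 1 ≤ C ∧ ∀ t : ℝ, 0 ≤ t →
      ‖NormedSpace.exp ((t : ℂ) • A)‖ ≤ C * Real.exp (-α * t) := by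
  set B := A + algebraMap ℂ (𝒳 →L[ℂ] 𝒳) ξ
  have hB : spectralRadius ℂ B < ENNReal.ofReal (ξ - α) := by
    refine (spectralRadius_le_of_forall_norm_le B fun z hz => ?_).trans_lt
      ((ENNReal.ofReal_lt_ofReal_iff (hr.1.trans hr.2)).mpr hr.2)
    rw [← spectrum.add_singleton_eq, Set.add_singleton] at hz
    obtain ⟨w, hw, rfl⟩ := hz
    exact hspec hw
  obtain ⟨M, hM1, hM⟩ := exists_norm_exp_smul_le_of_spectralRadius_lt B hB
  refine ⟨M, hM1, fun t ht => ?_⟩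
  have hA : (t : ℂ) • A = (t : ℂ) • B + algebraMap ℂ _ ((-(t * ξ) : ℝ) : ℂ) := by
    simp [B, Algebra.smul_def, mul_add]
  calc ‖exp ((t : ℂ) • A)‖ = Real.exp (-(t * ξ)) * ‖exp ((t : ℂ) • B)‖ := by
        rw [hA, exp_add_algebraMap, ← ofReal_exp, norm_smul, norm_real,
          Real.norm_of_nonneg (Real.exp_pos _).le]
    _ ≤ Real.exp (-(t * ξ)) * (M * Real.exp (t * (ξ - α))) := by gcongr; exact hM t ht
    _ = M * Real.exp (-α * t) := by rw [mul_left_comm, ← Real.exp_add]; ring_nf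

/-- Let `𝒳` be a complex Banach space and `A : 𝒳 → 𝒳` bounded linear.
If there are `ξ > 0`, `α > 0` and `r ∈ (0, ξ − α)` with `spectrum(A) ⊆ {z : |z + ξ| ≤ r}`,
then there is `C ≥ 1` with `‖exp(tA)‖ ≤ C e^{−αt}` for all `t ≥ 0`. -/
theorem stmt_12 {𝒳 : Type*} [NormedAddCommGroup 𝒳] [NormedSpace ℂ 𝒳] [CompleteSpace 𝒳]
    (A : 𝒳 →L[ℂ] 𝒳) (ξ α r : ℝ) (hξ : 0 < ξ) (hα : 0 < α) (hr : r ∈ Set.Ioo 0 (ξ - α))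
    (hspec : spectrum ℂ A ⊆ {z : ℂ | ‖z + (ξ : ℂ)‖ ≤ r}) :
    ∃ C : ℝ, 1 ≤ C ∧ ∀ t : ℝ, 0 ≤ t →
      ‖NormedSpace.exp ((t : ℂ) • A)‖ ≤ C * Real.exp (-α * t) :=
  stmt_12_general A ξ α r hr hspec
end

section
/- Let 𝒳 be a complex Banach space and A : 𝒳 → 𝒳 a bounded linear operator. Suppose there are ξ > 0, α > 0 and r ∈ (0, ξ − α) such that the spectrum of A is contained in {z ∈ ℂ : |z + ξ| ≤ r}. Then there exist φ ∈ (π/2, π) and Ξ > 0 such that every λ ∈ ℂ with λ ≠ −α and |arg(λ + α)| < φ belongs to the resolvent set of A and ‖(A − λ·Id)^{−1}‖ ≤ Ξ / |λ + α|. -/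
/-!
Choose `φ ∈ (π/2, π)` with `(ξ - α) sin φ > r`. The closed sector `|arg (λ + α)| ≤ φ` stays at
distance at least `(ξ - α) sin φ > r` from `-ξ`, so it lies in the resolvent set. On this closed
set `λ ↦ (λ + α) R(λ)` is continuous, and it is `O(1)` at infinity because `R(λ) = O(λ⁻¹)`;
hence it is bounded.
-/

open Filter Asymptotics Bornology Topology Set Real

theorem Ring.inverse_neg {M₀ : Type*} [MonoidWithZero M₀] [HasDistribNeg M₀] (x : M₀) :
    Ring.inverse (-x) = -Ring.inverse x := by
  by_cases hx : IsUnit x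
  · obtain ⟨u, rfl⟩ := hx
    rw [← Units.val_neg, Ring.inverse_unit, Ring.inverse_unit, inv_neg, Units.val_neg]
  · rw [Ring.inverse_non_unit _ hx, Ring.inverse_non_unit _ (mt (IsUnit.neg_iff x).mp hx),
      neg_zero]

namespace spectrum

variable {𝕜 A : Type*} [NontriviallyNormedField 𝕜] [NormedRing A] [NormedAlgebra 𝕜 A]

theorem inverse_sub_smul_one_eq_neg_resolvent (a : A) (k : 𝕜) :
    Ring.inverse (a - k • 1) = -resolvent a k := by
  rw [resolvent, ← Ring.inverse_neg, neg_sub, Algebra.algebraMap_eq_smul_one]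

variable [CompleteSpace A]

theorem continuousOn_resolvent (a : A) : ContinuousOn (resolvent a) (resolventSet 𝕜 a) :=
  fun _ hk ↦ (hasDerivAt_resolvent_const_left hk).continuousAt.continuousWithinAt

theorem sub_smul_resolvent_isBigO_one (a : A) (μ : 𝕜) :
    (fun z ↦ (z - μ) • resolvent a z) =O[cobounded 𝕜] (1 : 𝕜 → ℝ) := by
  have hsub : (fun z : 𝕜 ↦ z - μ) =O[cobounded 𝕜] id :=
    (isBigO_refl _ _).sub (isLittleO_const_id_cobounded μ).isBigO
  refine (hsub.smul (resolvent_isBigO_inv a)).trans (isBigO_of_le _ fun z ↦ ?_)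
  simpa using mul_inv_le_one (a := ‖z‖)

theorem isBounded_image_sub_smul_resolvent [ProperSpace 𝕜] (a : A) {S : Set 𝕜} (hS : IsClosed S)
    (hSa : S ⊆ resolventSet 𝕜 a) (μ : 𝕜) :
    IsBounded ((fun z ↦ (z - μ) • resolvent a z) '' S) := by
  have hcont : ContinuousOn (fun z ↦ (z - μ) • resolvent a z) S :=
    (continuousOn_id.sub continuousOn_const).smul ((continuousOn_resolvent a).mono hSa)
  rw [← range_domRestrict, hcont.domRestrict.isBounded_range_iff_isBigO]
  refine (sub_smul_resolvent_isBigO_one a μ).comp_tendsto ?_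
  rw [Metric.cobounded_eq_cocompact]
  exact hS.isClosedEmbedding_subtypeVal.tendsto_cocompact

end spectrum

theorem Complex.norm_mul_cos_le_re_of_abs_arg_le {φ : ℝ} {w : ℂ} (hφ : φ ≤ π) (h : |arg w| ≤ φ) :
    ‖w‖ * Real.cos φ ≤ w.re :=
  calc ‖w‖ * Real.cos φ ≤ ‖w‖ * Real.cos |arg w| := by
        gcongr
        exact Real.cos_le_cos_of_nonneg_of_le_pi (abs_nonneg _) hφ h
    _ = w.re := by rw [Real.cos_abs, norm_mul_cos_arg]

theorem Complex.mul_sin_le_norm_add_ofReal {φ D : ℝ} {w : ℂ} (hD : 0 ≤ D)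
    (hw : ‖w‖ * Real.cos φ ≤ w.re) :
    D * Real.sin φ ≤ ‖w + D‖ := by
  have hsq : (D * Real.sin φ) ^ 2 ≤ ‖w + D‖ ^ 2 :=
    calc (D * Real.sin φ) ^ 2 ≤ (‖w‖ + D * Real.cos φ) ^ 2 + (D * Real.sin φ) ^ 2 :=
          le_add_of_nonneg_left (sq_nonneg _)
      _ = ‖w‖ ^ 2 + 2 * D * (‖w‖ * Real.cos φ) + D ^ 2 := by
          linear_combination D ^ 2 * Real.sin_sq_add_cos_sq φ
      _ ≤ ‖w‖ ^ 2 + 2 * D * w.re + D ^ 2 := by gcongr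
      _ = ‖w + D‖ ^ 2 := by
          simp only [Complex.sq_norm, Complex.normSq_apply, Complex.add_re, Complex.add_im,
            Complex.ofReal_re, Complex.ofReal_im, add_zero]
          ring
  exact (abs_le_of_sq_le_sq' hsq (norm_nonneg _)).2

theorem Real.exists_mem_Ioo_lt_sin {s : ℝ} (hs : s < 1) : ∃ φ ∈ Ioo (π / 2) π, s < sin φ := by
  set t := (max s 0 + 1) / 2
  have ht0 : 0 < t := by positivity
  have ht1 : t < 1 := by grind
  refine ⟨π - arcsin t, ⟨?_, ?_⟩, ?_⟩
  · linarith [arcsin_lt_pi_div_two.2 ht1]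
  · linarith [arcsin_pos.2 ht0]
  · rw [sin_pi_sub, sin_arcsin (by linarith) ht1.le]
    grind

theorem stmt_13_general {𝒳 : Type*} [NormedAddCommGroup 𝒳] [NormedSpace ℂ 𝒳] [CompleteSpace 𝒳]
    (A : 𝒳 →L[ℂ] 𝒳) (ξ α r : ℝ) (hr : r ∈ Set.Ioo 0 (ξ - α))
    (hspec : spectrum ℂ A ⊆ {z : ℂ | ‖z + (ξ : ℂ)‖ ≤ r}) :
    ∃ φ ∈ Set.Ioo (Real.pi / 2) Real.pi, ∃ Ξ : ℝ, 0 < Ξ ∧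
      ∀ lam : ℂ, lam ≠ (-α : ℂ) → |Complex.arg (lam + (α : ℂ))| < φ →
        lam ∉ spectrum ℂ A ∧
        ‖Ring.inverse (A - lam • (1 : 𝒳 →L[ℂ] 𝒳))‖ ≤ Ξ / ‖lam + (α : ℂ)‖ := by
  obtain ⟨hr0, hrD⟩ := hr
  have hD : 0 < ξ - α := hr0.trans hrD
  obtain ⟨φ, hφ, hsin⟩ := Real.exists_mem_Ioo_lt_sin ((div_lt_one hD).2 hrD)
  set S : Set ℂ := {z | ‖z + α‖ * Real.cos φ ≤ (z + α).re}
  have hS : IsClosed S := isClosed_le (by fun_prop) (by fun_prop)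
  have hSρ : S ⊆ resolventSet ℂ A := fun z hz ↦ by
    by_contra hzσ
    have hdist := Complex.mul_sin_le_norm_add_ofReal hD.le hz
    rw [Complex.ofReal_sub, add_add_sub_cancel] at hdist
    rw [div_lt_iff₀ hD] at hsin
    have hball : ‖z + ξ‖ ≤ r := hspec hzσ
    linarith
  obtain ⟨C, hC⟩ := (spectrum.isBounded_image_sub_smul_resolvent A hS hSρ (-α)).exists_norm_le
  refine ⟨φ, hφ, max C 1, by positivity, fun lam hne harg ↦ ?_⟩
  have hlam : lam ∈ S := Complex.norm_mul_cos_le_re_of_abs_arg_le hφ.2.le harg.le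
  have hpos : 0 < ‖lam + α‖ := norm_pos_iff.2 fun h ↦ hne (eq_neg_of_add_eq_zero_left h)
  refine ⟨spectrum.notMem_iff.2 (hSρ hlam), ?_⟩
  have hbound : ‖(lam - -α) • resolvent A lam‖ ≤ C := hC _ ⟨lam, hlam, rfl⟩
  rw [sub_neg_eq_add, norm_smul] at hbound
  rw [spectrum.inverse_sub_smul_one_eq_neg_resolvent, norm_neg, le_div_iff₀ hpos, mul_comm]
  exact hbound.trans (le_max_left _ _)

/-- Let `𝒳` be a complex Banach space and `A : 𝒳 → 𝒳` bounded linear.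
If there are `ξ > 0`, `α > 0` and `r ∈ (0, ξ − α)` with `spectrum(A) ⊆ {z : |z + ξ| ≤ r}`,
then there exist `φ ∈ (π/2, π)` and `Ξ > 0` such that every `λ ≠ −α` with
`|arg(λ + α)| < φ` belongs to the resolvent set of `A` and
`‖(A − λ·Id)⁻¹‖ ≤ Ξ / |λ + α|`. -/
theorem stmt_13 {𝒳 : Type*} [NormedAddCommGroup 𝒳] [NormedSpace ℂ 𝒳] [CompleteSpace 𝒳]
    (A : 𝒳 →L[ℂ] 𝒳) (ξ α r : ℝ) (hξ : 0 < ξ) (hα : 0 < α) (hr : r ∈ Set.Ioo 0 (ξ - α))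
    (hspec : spectrum ℂ A ⊆ {z : ℂ | ‖z + (ξ : ℂ)‖ ≤ r}) :
    ∃ φ ∈ Set.Ioo (Real.pi / 2) Real.pi, ∃ Ξ : ℝ, 0 < Ξ ∧
      ∀ lam : ℂ, lam ≠ (-α : ℂ) → |Complex.arg (lam + (α : ℂ))| < φ →
        lam ∉ spectrum ℂ A ∧
        ‖Ring.inverse (A - lam • (1 : 𝒳 →L[ℂ] 𝒳))‖ ≤ Ξ / ‖lam + (α : ℂ)‖ :=
  stmt_13_general A ξ α r hr hspec
end

section
/- For every real κ > 1, writing C(κ) = ∫₀¹ √(1 − ((2x − 1)/κ)²) dx, one has (1/κ) ∫₀¹ (2x − 1)² / √(κ² − (2x − 1)²) dx = C(κ) − √(κ² − 1)/κ; in particular (1/(κ C(κ))) ∫₀¹ (2x − 1)² / √(κ² − (2x − 1)²) dx = 1 − √(κ² − 1)/(κ C(κ)) < 1. -/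
open MeasureTheory intervalIntegral Real

/-!
Since `t ↦ t √(c - t²)` has derivative `√(c - t²) - t² / √(c - t²)`, integrating over `[-1, 1]`
with `c = κ²` shows that `∫ t² / √(κ² - t²)` and `∫ √(κ² - t²)` differ by the boundary term
`2 √(κ² - 1)`. The substitution `t = 2x - 1` and `√(1 - (t/κ)²) = √(κ² - t²) / κ` turn this into
the identity. As the first integrand is nonnegative, `κ C ≥ √(κ² - 1) > 0`, which gives the
strict inequality.
-/

theorem hasDerivAt_mul_sqrt_sub_sq {c t : ℝ} (ht : t ^ 2 < c) :
    HasDerivAt (fun t => t * √(c - t ^ 2)) (√(c - t ^ 2) - t ^ 2 / √(c - t ^ 2)) t := by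
  have hpos : 0 < c - t ^ 2 := sub_pos.mpr ht
  have hsqrt : HasDerivAt (fun t => √(c - t ^ 2)) (-(2 * t) / (2 * √(c - t ^ 2))) t := by
    simpa using ((hasDerivAt_pow 2 t).const_sub c).sqrt hpos.ne'
  refine ((hasDerivAt_id' t).mul hsqrt).congr_deriv ?_
  have := (sqrt_pos.mpr hpos).ne'
  field_simp
  ring

theorem integral_sq_div_sqrt_sub_sq {a b c : ℝ} (h : ∀ t ∈ Set.uIcc a b, t ^ 2 < c) :
    ∫ t in a..b, t ^ 2 / √(c - t ^ 2)
      = (∫ t in a..b, √(c - t ^ 2)) - (b * √(c - b ^ 2) - a * √(c - a ^ 2)) := by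
  have hsqrt : Continuous fun t : ℝ => √(c - t ^ 2) := by fun_prop
  have hquot : IntervalIntegrable (fun t => t ^ 2 / √(c - t ^ 2)) volume a b :=
    ContinuousOn.intervalIntegrable <| (continuous_pow 2).continuousOn.div hsqrt.continuousOn
      fun t ht => (sqrt_pos.mpr (sub_pos.mpr (h t ht))).ne'
  have hsub := (hsqrt.intervalIntegrable a b).sub hquot
  have hftc := integral_eq_sub_of_hasDerivAt
    (fun t ht => hasDerivAt_mul_sqrt_sub_sq (h t ht)) hsub
  rw [integral_sub (hsqrt.intervalIntegrable a b) hquot] at hftc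
  linarith

theorem integral_comp_two_mul_sub_one (f : ℝ → ℝ) :
    ∫ x in (0:ℝ)..1, f (2 * x - 1) = (∫ t in (-1:ℝ)..1, f t) / 2 := by
  rw [integral_comp_mul_sub f two_ne_zero, smul_eq_mul, inv_mul_eq_div]
  norm_num

theorem sqrt_one_sub_div_sq {κ : ℝ} (hκ : 0 < κ) (t : ℝ) :
    √(1 - (t / κ) ^ 2) = √(κ ^ 2 - t ^ 2) / κ := by
  rw [show 1 - (t / κ) ^ 2 = (κ ^ 2 - t ^ 2) / κ ^ 2 by field_simp, sqrt_div' _ (sq_nonneg κ),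
    sqrt_sq hκ.le]

/-- For every real `κ > 1`, writing
`C(κ) = ∫₀¹ √(1 − ((2x − 1)/κ)²) dx`, one has
`(1/κ) ∫₀¹ (2x − 1)² / √(κ² − (2x − 1)²) dx = C(κ) − √(κ² − 1)/κ`; in particular
`(1/(κ C(κ))) ∫₀¹ (2x − 1)² / √(κ² − (2x − 1)²) dx = 1 − √(κ² − 1)/(κ C(κ)) < 1`. -/
theorem stmt_17 (κ : ℝ) (hκ : 1 < κ) (C : ℝ)
    (hC : C = ∫ x in (0:ℝ)..1, Real.sqrt (1 - ((2*x - 1)/κ)^2)) :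
    ((1/κ) * ∫ x in (0:ℝ)..1, (2*x - 1)^2 / Real.sqrt (κ^2 - (2*x - 1)^2)
        = C - Real.sqrt (κ^2 - 1) / κ)
    ∧ ((1/(κ*C)) * ∫ x in (0:ℝ)..1, (2*x - 1)^2 / Real.sqrt (κ^2 - (2*x - 1)^2)
        = 1 - Real.sqrt (κ^2 - 1) / (κ*C))
    ∧ 1 - Real.sqrt (κ^2 - 1) / (κ*C) < 1 := by
  have hκ0 : 0 < κ := one_pos.trans hκ
  have hbound : ∀ t ∈ Set.uIcc (-1 : ℝ) 1, t ^ 2 < κ ^ 2 := fun t ht => by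
    rw [Set.uIcc_of_le (by norm_num)] at ht
    nlinarith [ht.1, ht.2]
  have hκC : κ * C = (∫ t in (-1:ℝ)..1, √(κ ^ 2 - t ^ 2)) / 2 := by
    simp_rw [hC, sqrt_one_sub_div_sq hκ0, intervalIntegral.integral_div,
      integral_comp_two_mul_sub_one (fun t => √(κ ^ 2 - t ^ 2))]
    field_simp
  have hI : ∫ x in (0:ℝ)..1, (2*x - 1)^2 / √(κ^2 - (2*x - 1)^2) = κ * C - √(κ ^ 2 - 1) := by
    rw [integral_comp_two_mul_sub_one (fun t => t ^ 2 / √(κ ^ 2 - t ^ 2)),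
      integral_sq_div_sqrt_sub_sq hbound, hκC]
    norm_num only [neg_one_sq, mul_one, neg_mul, one_mul]
    ring
  have hsqrt_pos : 0 < √(κ ^ 2 - 1) := sqrt_pos.mpr (by nlinarith)
  have hκC_pos : 0 < κ * C := by
    have : 0 ≤ ∫ x in (0:ℝ)..1, (2*x - 1)^2 / √(κ^2 - (2*x - 1)^2) :=
      integral_nonneg zero_le_one fun x _ => by positivity
    linarith
  refine ⟨?_, ?_, ?_⟩
  · rw [hI]; field_simp
  · have := (pos_of_mul_pos_right hκC_pos hκ0.le).ne'
    rw [hI]; field_simp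
  · have : 0 < √(κ ^ 2 - 1) / (κ * C) := div_pos hsqrt_pos hκC_pos
    linarith
end
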